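/- arXiv:1204.4271 — 10 statements merged into one kernel-verified Lean document; each statement's English description precedes it below -/
import Mathlib

section
/- Let p be a prime and let G be a group which is the internal direct product of subgroups D and A (that is, every element of D commutes with every element of A, D ∩ A = {1}, and DA = G), where A is a finitely generated abelian group, the center Z(D) of D is finitely generated, D is generated by {x, y} together with Z(D) for some x, y ∈ D with x^p ∈ Z(D) and y^p ∈ Z(D), and [x,y] = t₁^{p^{m₁−1}} for some t₁ ∈ Z(D) of order p^{m₁} with m₁ ≥ 1. Then G is finitely generated and G/Z(G) ≅ C_p × C_p. -/
/-- Hom from `Multiplicative (ZMod n)` given an element with `q ^ n = 1`. -/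
def powHomZMod {H : Type*} [Group H] (n : ℕ) [NeZero n] (q : H) (h : q ^ n = 1) :
    Multiplicative (ZMod n) →* H where
  toFun u := q ^ (Multiplicative.toAdd u).val
  map_one' := by simp
  map_mul' a b := by
    show q ^ ((Multiplicative.toAdd a + Multiplicative.toAdd b).val) = _
    rw [ZMod.val_add, ← pow_eq_pow_mod _ h, pow_add]

theorem powHomZMod_apply {H : Type*} [Group H] (n : ℕ) [NeZero n] (q : H) (h : q ^ n = 1)
    (u : Multiplicative (ZMod n)) : powHomZMod n q h u = q ^ (Multiplicative.toAdd u).val := rfl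

section Dside

variable {H : Type*} [Group H] (p : ℕ) (x y c : H)

theorem L1 (hc : ∀ w : H, Commute w c) (hxy : x * y = y * x * c) :
    ∀ j : ℕ, x * y ^ j = y ^ j * x * c ^ j := by
  intro j
  induction j with
  | zero => simp
  | succ n ih =>
    calc x * y ^ (n + 1) = (x * y ^ n) * y := by rw [pow_succ, ← mul_assoc]
    _ = y ^ n * x * (c ^ n * y) := by rw [ih, mul_assoc]
    _ = y ^ n * x * (y * c ^ n) := by rw [((hc y).symm.pow_left n).eq]
    _ = y ^ n * (x * y) * c ^ n := by group
    _ = y ^ n * (y * x * c) * c ^ n := by rw [hxy]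
    _ = y ^ (n + 1) * x * c ^ (n + 1) := by rw [pow_succ, pow_succ]; group

theorem key_c_pow (hc : ∀ w : H, Commute w c) (hxy : x * y = y * x * c)
    (hyx : y * x = x * y * c⁻¹) {i j : ℕ}
    (hzx : x * (x ^ i * y ^ j) = (x ^ i * y ^ j) * x)
    (hzy : y * (x ^ i * y ^ j) = (x ^ i * y ^ j) * y) :
    c ^ j = 1 ∧ c ^ i = 1 := by
  constructor
  · -- from commuting with x
    have h1 : x ^ i * (x * y ^ j) = x ^ i * (y ^ j * x) := by
      calc x ^ i * (x * y ^ j) = x * (x ^ i * y ^ j) := by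
            rw [← mul_assoc, ← mul_assoc, (Commute.refl x).pow_left i]
      _ = (x ^ i * y ^ j) * x := hzx
      _ = x ^ i * (y ^ j * x) := by rw [mul_assoc]
    have h2 : x * y ^ j = y ^ j * x := mul_left_cancel h1
    have h3 : y ^ j * x * c ^ j = y ^ j * x * 1 := by
      rw [mul_one, ← L1 x y c hc hxy j, h2]
    exact mul_left_cancel h3
  · -- from commuting with y
    have hL2 : ∀ i : ℕ, y * x ^ i = x ^ i * y * c⁻¹ ^ i :=
      L1 y x c⁻¹ (fun w => (hc w).inv_right) hyx
    have h1 : x ^ i * (y * c⁻¹ ^ i * y ^ j) = x ^ i * (y ^ j * y) := by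
      calc x ^ i * (y * c⁻¹ ^ i * y ^ j) = (y * x ^ i) * y ^ j := by
            rw [hL2 i]; group
      _ = y * (x ^ i * y ^ j) := by rw [mul_assoc]
      _ = (x ^ i * y ^ j) * y := hzy
      _ = x ^ i * (y ^ j * y) := by rw [mul_assoc]
    have h2 : y * c⁻¹ ^ i * y ^ j = y ^ j * y := mul_left_cancel h1
    have h3 : y * (c⁻¹ ^ i * y ^ j) = y * y ^ j := by
      rw [← mul_assoc, h2, (Commute.refl y).pow_left j]
    have h4 : c⁻¹ ^ i * y ^ j = y ^ j := mul_left_cancel h3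
    have h5 : c⁻¹ ^ i = 1 := by
      have := mul_right_cancel (h4.trans (one_mul (y ^ j)).symm)
      exact this
    rw [← inv_inv (c ^ i), ← inv_pow, h5, inv_one]

end Dside

theorem decomposition_converse (p : ℕ) (hp : p.Prime) (G : Type*) [Group G]
    (D A : Subgroup G)
    (hcomm : ∀ d ∈ D, ∀ a ∈ A, Commute d a)
    (hint : D ⊓ A = ⊥)
    (hprod : ∀ g : G, ∃ d ∈ D, ∃ a ∈ A, g = d * a)
    (hAfg : A.FG)
    (hAab : ∀ a ∈ A, ∀ b ∈ A, Commute a b)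
    (hZfg : (Subgroup.center ↥D).FG)
    (x y : ↥D)
    (hxp : x ^ p ∈ Subgroup.center ↥D)
    (hyp : y ^ p ∈ Subgroup.center ↥D)
    (hgen : Subgroup.closure (({x, y} : Set ↥D) ∪ (Subgroup.center ↥D : Set ↥D)) = ⊤)
    (t₁ : ↥D) (ht₁ : t₁ ∈ Subgroup.center ↥D)
    (m₁ : ℕ) (hm₁ : 1 ≤ m₁)
    (hord : orderOf t₁ = p ^ m₁)
    (hs : x⁻¹ * y⁻¹ * x * y = t₁ ^ p ^ (m₁ - 1)) :
    Group.FG G ∧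
    Nonempty ((G ⧸ Subgroup.center G) ≃*
      Multiplicative (ZMod p) × Multiplicative (ZMod p)) := by
  classical
  haveI : Fact p.Prime := ⟨hp⟩
  haveI : NeZero p := ⟨hp.pos.ne'⟩
  haveI : Fact (1 < p) := ⟨hp.one_lt⟩
  -- uniqueness of the decomposition
  have huniq : ∀ d ∈ D, ∀ a ∈ A, ∀ d' ∈ D, ∀ a' ∈ A, d * a = d' * a' → d = d' := by
    intro d hd a ha d' hd' a' ha' h
    have h1 : d'⁻¹ * d = a' * a⁻¹ := by
      have h2 : d'⁻¹ * (d * a) * a⁻¹ = d'⁻¹ * (d' * a') * a⁻¹ := by rw [h]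
      calc d'⁻¹ * d = d'⁻¹ * (d * a) * a⁻¹ := by group
      _ = d'⁻¹ * (d' * a') * a⁻¹ := h2
      _ = a' * a⁻¹ := by group
    have hmemD : d'⁻¹ * d ∈ D := mul_mem (inv_mem hd') hd
    have hmemA : d'⁻¹ * d ∈ A := by rw [h1]; exact mul_mem ha' (inv_mem ha)
    have hmem : d'⁻¹ * d ∈ D ⊓ A := Subgroup.mem_inf.mpr ⟨hmemD, hmemA⟩
    rw [hint, Subgroup.mem_bot] at hmem
    have := inv_mul_eq_one.mp hmem
    exact this.symm
  choose dp hdpD ap hapA heq using hprod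
  have hdp_eq : ∀ g : G, ∀ d ∈ D, ∀ a ∈ A, g = d * a → dp g = d := by
    intro g d hd a ha hg
    exact huniq _ (hdpD g) _ (hapA g) d hd a ha ((heq g).symm.trans hg)
  -- the projection homomorphism onto D ⧸ Z(D)
  set Q := ↥D ⧸ Subgroup.center ↥D with hQ
  have hdp_mul : ∀ g₁ g₂ : G, dp (g₁ * g₂) = dp g₁ * dp g₂ := by
    intro g₁ g₂
    refine hdp_eq _ _ (mul_mem (hdpD g₁) (hdpD g₂)) (ap g₁ * ap g₂)
      (mul_mem (hapA g₁) (hapA g₂)) ?_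
    have hc : dp g₂ * ap g₁ = ap g₁ * dp g₂ := hcomm _ (hdpD g₂) _ (hapA g₁)
    calc g₁ * g₂ = (dp g₁ * ap g₁) * (dp g₂ * ap g₂) := by rw [← heq, ← heq]
    _ = dp g₁ * (ap g₁ * dp g₂) * ap g₂ := by group
    _ = dp g₁ * (dp g₂ * ap g₁) * ap g₂ := by rw [hc]
    _ = dp g₁ * dp g₂ * (ap g₁ * ap g₂) := by group
  let Φ : G →* Q := MonoidHom.mk' (fun g => QuotientGroup.mk (⟨dp g, hdpD g⟩ : ↥D))
    (by
      intro g₁ g₂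
      have h : (⟨dp (g₁ * g₂), hdpD _⟩ : ↥D) = ⟨dp g₁, hdpD _⟩ * ⟨dp g₂, hdpD _⟩ :=
        Subtype.ext (hdp_mul g₁ g₂)
      beta_reduce
      rw [h]; rfl)
  have hΦ_apply : ∀ g : G, Φ g = QuotientGroup.mk (⟨dp g, hdpD g⟩ : ↥D) := fun _ => rfl
  have hΦD : ∀ d : ↥D, Φ (d : G) = QuotientGroup.mk d := by
    intro d
    have h1 : dp (d : G) = (d : G) := hdp_eq _ _ d.2 1 (one_mem A) (by rw [mul_one])
    rw [hΦ_apply]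
    congr 1
    exact Subtype.ext h1
  have hΦsurj : Function.Surjective Φ := by
    intro q
    refine QuotientGroup.induction_on q fun d => ⟨(d : G), hΦD d⟩
  have hker : Φ.ker = Subgroup.center G := by
    ext g
    rw [MonoidHom.mem_ker, hΦ_apply, QuotientGroup.eq_one_iff, Subgroup.mem_center_iff,
      Subgroup.mem_center_iff]
    constructor
    · intro h g'
      have c1 : Commute (dp g) (dp g') := by
        have := Subtype.ext_iff.mp (h ⟨dp g', hdpD g'⟩)
        exact (congrArg Subtype.val (h ⟨dp g', hdpD g'⟩) : dp g' * dp g = dp g * dp g').symm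
      have c2 : Commute (dp g) (ap g') := hcomm _ (hdpD g) _ (hapA g')
      have c3 : Commute (ap g) (dp g') := (hcomm _ (hdpD g') _ (hapA g)).symm
      have c4 : Commute (ap g) (ap g') := hAab _ (hapA g) _ (hapA g')
      have : Commute (dp g' * ap g') (dp g * ap g) :=
        ((c1.symm.mul_right c3.symm).mul_left (c2.symm.mul_right c4.symm))
      calc g' * g = (dp g' * ap g') * (dp g * ap g) := by rw [← heq, ← heq]
      _ = (dp g * ap g) * (dp g' * ap g') := this
      _ = g * g' := by rw [← heq, ← heq]
    · intro h d'
      apply Subtype.ext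
      show (d' : G) * dp g = dp g * (d' : G)
      have h1 : g * (d' : G) = (d' : G) * g := (h (d' : G)).symm
      have h2 : ap g * (d' : G) = (d' : G) * ap g := (hcomm _ d'.2 _ (hapA g)).symm
      have h3 : dp g * ((d' : G) * ap g) = (d' : G) * (dp g * ap g) := by
        calc dp g * ((d' : G) * ap g) = dp g * (ap g * (d' : G)) := by rw [h2]
        _ = (dp g * ap g) * (d' : G) := by rw [mul_assoc]
        _ = g * (d' : G) := by rw [← heq]
        _ = (d' : G) * g := h1
        _ = (d' : G) * (dp g * ap g) := by rw [← heq g]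
      have h4 : dp g * (d' : G) * ap g = (d' : G) * dp g * ap g := by
        rw [mul_assoc, h3, mul_assoc]
      exact (mul_right_cancel h4).symm
  -- the element c and its order
  set c : ↥D := t₁ ^ p ^ (m₁ - 1) with hc_def
  have hc_mem : c ∈ Subgroup.center ↥D := pow_mem ht₁ _
  have hcw : ∀ w : ↥D, Commute w c := fun w => Subgroup.mem_center_iff.mp hc_mem w
  have hxy : x * y = y * x * c := by rw [← hs]; group
  have hyx : y * x = x * y * c⁻¹ := by rw [← hs]; group
  have hordc : orderOf c = p := by
    rw [hc_def, orderOf_pow' t₁ (pow_pos hp.pos (m₁ - 1)).ne', hord]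
    have hdvd : p ^ (m₁ - 1) ∣ p ^ m₁ := pow_dvd_pow p (Nat.sub_le m₁ 1)
    rw [Nat.gcd_eq_right hdvd, Nat.pow_div (Nat.sub_le m₁ 1) hp.pos,
      Nat.sub_sub_self hm₁, pow_one]
  -- the map ψ : C_p × C_p → Q
  have hq1p : ((x : Q)) ^ p = 1 := by
    rw [← QuotientGroup.mk_pow, QuotientGroup.eq_one_iff]
    exact hxp
  have hq2p : ((y : Q)) ^ p = 1 := by
    rw [← QuotientGroup.mk_pow, QuotientGroup.eq_one_iff]
    exact hyp
  have hmkc : ((c : Q)) = 1 := (QuotientGroup.eq_one_iff _).mpr hc_mem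
  have hq12 : Commute ((x : Q)) ((y : Q)) := by
    show (x : Q) * (y : Q) = (y : Q) * (x : Q)
    rw [← QuotientGroup.mk_mul, ← QuotientGroup.mk_mul, hxy, QuotientGroup.mk_mul, hmkc, mul_one]
  let f1 := powHomZMod p (x : Q) hq1p
  let f2 := powHomZMod p (y : Q) hq2p
  let ψ : Multiplicative (ZMod p) × Multiplicative (ZMod p) →* Q :=
    MonoidHom.noncommCoprod f1 f2 (fun m n => hq12.pow_pow _ _)
  have hψ_apply : ∀ u v : Multiplicative (ZMod p),
      ψ (u, v) = (x : Q) ^ (Multiplicative.toAdd u).val * (y : Q) ^ (Multiplicative.toAdd v).val :=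
    fun u v => rfl
  -- injectivity
  have hkey : ∀ i j : ℕ, (x ^ i * y ^ j) ∈ Subgroup.center ↥D → c ^ j = 1 ∧ c ^ i = 1 := by
    intro i j hz
    have hzmem := Subgroup.mem_center_iff.mp hz
    exact key_c_pow x y c hcw hxy hyx (hzmem x) (hzmem y)
  have hψinj : Function.Injective ψ := by
    rw [injective_iff_map_eq_one]
    rintro ⟨u, v⟩ h
    rw [hψ_apply, ← QuotientGroup.mk_pow, ← QuotientGroup.mk_pow, ← QuotientGroup.mk_mul,
      QuotientGroup.eq_one_iff] at h
    obtain ⟨hcv, hcu⟩ := hkey _ _ h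
    have hu : (Multiplicative.toAdd u).val = 0 := by
      have hdvd : orderOf c ∣ (Multiplicative.toAdd u).val := orderOf_dvd_of_pow_eq_one hcu
      rw [hordc] at hdvd
      exact Nat.eq_zero_of_dvd_of_lt hdvd (ZMod.val_lt _)
    have hv : (Multiplicative.toAdd v).val = 0 := by
      have hdvd : orderOf c ∣ (Multiplicative.toAdd v).val := orderOf_dvd_of_pow_eq_one hcv
      rw [hordc] at hdvd
      exact Nat.eq_zero_of_dvd_of_lt hdvd (ZMod.val_lt _)
    have hu' : u = 1 := by
      have := (ZMod.val_eq_zero _).mp hu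
      exact this
    have hv' : v = 1 := by
      have := (ZMod.val_eq_zero _).mp hv
      exact this
    rw [Prod.mk_eq_one]
    exact ⟨hu', hv'⟩
  -- surjectivity
  have hψsurj : Function.Surjective ψ := by
    rw [← MonoidHom.range_eq_top]
    have hmkx : (x : Q) ∈ ψ.range := by
      refine ⟨(Multiplicative.ofAdd (1 : ZMod p), 1), ?_⟩
      rw [hψ_apply]
      simp [ZMod.val_one]
    have hmky : (y : Q) ∈ ψ.range := by
      refine ⟨(1, Multiplicative.ofAdd (1 : ZMod p)), ?_⟩
      rw [hψ_apply]
      simp [ZMod.val_one]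
    have hall : ∀ d : ↥D, (QuotientGroup.mk d : Q) ∈ ψ.range := by
      intro d
      have hd : d ∈ Subgroup.closure (({x, y} : Set ↥D) ∪ (Subgroup.center ↥D : Set ↥D)) := by
        rw [hgen]; exact Subgroup.mem_top d
      refine Subgroup.closure_induction ?_ ?_ ?_ ?_ hd
      · rintro w (hw | hw)
        · rcases hw with rfl | rfl
          · exact hmkx
          · exact hmky
        · have h1 : (QuotientGroup.mk w : Q) = 1 := (QuotientGroup.eq_one_iff _).mpr hw
          rw [h1]; exact one_mem _
      · have : (QuotientGroup.mk (1 : ↥D) : Q) = 1 := rfl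
        rw [this]; exact one_mem _
      · intro a b _ _ ha hb
        rw [QuotientGroup.mk_mul]; exact mul_mem ha hb
      · intro a _ ha
        have : (QuotientGroup.mk a⁻¹ : Q) = (QuotientGroup.mk a : Q)⁻¹ := rfl
        rw [this]; exact inv_mem ha
    rw [eq_top_iff]
    intro q _
    exact QuotientGroup.induction_on q hall
  -- the isomorphism
  have heq1 : G ⧸ Subgroup.center G ≃* Q :=
    (QuotientGroup.quotientMulEquivOfEq hker.symm).trans
      (QuotientGroup.quotientKerEquivOfSurjective Φ hΦsurj)
  have heq2 : Multiplicative (ZMod p) × Multiplicative (ZMod p) ≃* Q :=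
    MulEquiv.ofBijective ψ ⟨hψinj, hψsurj⟩
  refine ⟨?_, ⟨heq1.trans heq2.symm⟩⟩
  -- finite generation
  obtain ⟨SZ, hSZc, hSZfin⟩ := (Subgroup.fg_iff _).mp hZfg
  obtain ⟨TA, hTAc, hTAfin⟩ := (Subgroup.fg_iff _).mp hAfg
  have h1 : Subgroup.closure (({x, y} : Set ↥D) ∪ SZ) = (⊤ : Subgroup ↥D) := by
    rw [Subgroup.closure_union, hSZc, ← hgen, Subgroup.closure_union,
      Subgroup.closure_eq (Subgroup.center ↥D)]
  have hDgen : D = Subgroup.closure (⇑D.subtype '' (({x, y} : Set ↥D) ∪ SZ)) := by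
    have h2 : Subgroup.map D.subtype (Subgroup.closure (({x, y} : Set ↥D) ∪ SZ)) = D := by
      rw [h1, ← MonoidHom.range_eq_map, Subgroup.range_subtype]
    rw [MonoidHom.map_closure] at h2
    exact h2.symm
  have htopG : D ⊔ A = ⊤ := by
    rw [eq_top_iff]
    intro g _
    rw [heq g]
    exact mul_mem ((le_sup_left : D ≤ D ⊔ A) (hdpD g)) ((le_sup_right : A ≤ D ⊔ A) (hapA g))
  refine Group.fg_iff.mpr ⟨(⇑D.subtype '' (({x, y} : Set ↥D) ∪ SZ)) ∪ TA, ?_, ?_⟩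
  · rw [Subgroup.closure_union, ← hDgen, hTAc, htopG]
  · refine Set.Finite.union (Set.Finite.image _ ?_) hTAfin
    exact Set.Finite.union ((Set.finite_singleton _).insert _) hSZfin
end

section
/- Let p be a prime and let D be a group such that D is generated by {x, y} together with its center Z(D), where Z(D) is the internal direct product ⟨t₁⟩ × ⟨z₂⟩ × ⟨z₃⟩, t₁ has order p^{m₁} with m₁ ≥ 1, [x,y] = t₁^{p^{m₁−1}}, each of z₂, z₃ has order a power of p or infinite order, x^p lies in the subgroup generated by t₁ and z₂, and y^p ∈ Z(D). Then there exist x', y' ∈ D such that D is generated by {x', y'} together with Z(D), [x',y'] = t₁^{p^{m₁−1}}, x'^p = t₁^α z₂^β, and y'^p = t₁^γ z₂^ε z₃^δ, with exponents α, β, γ, δ, ε ∈ {0, 1, …, p−1}. -/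
private lemma conj_central {D : Type*} [Group D] {c : D} (hc : c ∈ Subgroup.center D)
    (g h : D) : g * (c * h) = c * (g * h) := by
  rw [← mul_assoc, Subgroup.mem_center_iff.mp hc g, mul_assoc]

private lemma pair_mul {D : Type*} [Group D] {a b : D}
    (hb : b ∈ Subgroup.center D) (i j i' j' : ℤ) :
    (a ^ i * b ^ j) * (a ^ i' * b ^ j') = a ^ (i + i') * b ^ (j + j') := by
  have h1 : b ^ j * a ^ i' = a ^ i' * b ^ j :=
    (Subgroup.mem_center_iff.mp (Subgroup.zpow_mem _ hb j) (a ^ i')).symm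
  calc (a ^ i * b ^ j) * (a ^ i' * b ^ j')
      = a ^ i * (b ^ j * a ^ i') * b ^ j' := by simp [mul_assoc]
    _ = a ^ i * (a ^ i' * b ^ j) * b ^ j' := by rw [h1]
    _ = (a ^ i * a ^ i') * (b ^ j * b ^ j') := by simp [mul_assoc]
    _ = a ^ (i + i') * b ^ (j + j') := by rw [zpow_add, zpow_add]

private lemma triple_mul {D : Type*} [Group D] {a b c : D}
    (hb : b ∈ Subgroup.center D) (hc : c ∈ Subgroup.center D) (i j k i' j' k' : ℤ) :
    (a ^ i * b ^ j * c ^ k) * (a ^ i' * b ^ j' * c ^ k')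
      = a ^ (i + i') * b ^ (j + j') * c ^ (k + k') := by
  have h1 : c ^ k * a ^ i' = a ^ i' * c ^ k :=
    (Subgroup.mem_center_iff.mp (Subgroup.zpow_mem _ hc k) (a ^ i')).symm
  have h2 : b ^ j * a ^ i' = a ^ i' * b ^ j :=
    (Subgroup.mem_center_iff.mp (Subgroup.zpow_mem _ hb j) (a ^ i')).symm
  have h3 : c ^ k * b ^ j' = b ^ j' * c ^ k :=
    (Subgroup.mem_center_iff.mp (Subgroup.zpow_mem _ hc k) (b ^ j')).symm
  calc (a ^ i * b ^ j * c ^ k) * (a ^ i' * b ^ j' * c ^ k')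
      = a ^ i * b ^ j * (c ^ k * a ^ i') * (b ^ j' * c ^ k') := by simp [mul_assoc]
    _ = a ^ i * b ^ j * (a ^ i' * c ^ k) * (b ^ j' * c ^ k') := by rw [h1]
    _ = a ^ i * (b ^ j * a ^ i') * ((c ^ k * b ^ j') * c ^ k') := by simp [mul_assoc]
    _ = a ^ i * (a ^ i' * b ^ j) * ((b ^ j' * c ^ k) * c ^ k') := by rw [h2, h3]
    _ = (a ^ i * a ^ i') * (b ^ j * b ^ j') * (c ^ k * c ^ k') := by simp [mul_assoc]
    _ = a ^ (i + i') * b ^ (j + j') * c ^ (k + k') := by rw [zpow_add, zpow_add, zpow_add]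

private lemma mem_closure_pair' {D : Type*} [Group D] {a b : D}
    (hb : b ∈ Subgroup.center D) {g : D}
    (hg : g ∈ Subgroup.closure ({a, b} : Set D)) :
    ∃ i j : ℤ, g = a ^ i * b ^ j := by
  induction hg using Subgroup.closure_induction with
  | mem x hx =>
      simp only [Set.mem_insert_iff, Set.mem_singleton_iff] at hx
      rcases hx with rfl | rfl
      · exact ⟨1, 0, by simp⟩
      · exact ⟨0, 1, by simp⟩
  | one => exact ⟨0, 0, by simp⟩
  | mul x y hx hy ihx ihy =>
      obtain ⟨i, j, rfl⟩ := ihx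
      obtain ⟨i', j', rfl⟩ := ihy
      exact ⟨i + i', j + j', pair_mul (a := a) hb i j i' j'⟩
  | inv x hx ih =>
      obtain ⟨i, j, rfl⟩ := ih
      exact ⟨-i, -j, inv_eq_of_mul_eq_one_right (by rw [pair_mul (a := a) hb]; simp)⟩

private lemma mem_closure_triple' {D : Type*} [Group D] {a b c : D}
    (hb : b ∈ Subgroup.center D) (hc : c ∈ Subgroup.center D) {g : D}
    (hg : g ∈ Subgroup.closure ({a, b, c} : Set D)) :
    ∃ i j k : ℤ, g = a ^ i * b ^ j * c ^ k := by
  induction hg using Subgroup.closure_induction with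
  | mem x hx =>
      simp only [Set.mem_insert_iff, Set.mem_singleton_iff] at hx
      rcases hx with rfl | rfl | rfl
      · exact ⟨1, 0, 0, by simp⟩
      · exact ⟨0, 1, 0, by simp⟩
      · exact ⟨0, 0, 1, by simp⟩
  | one => exact ⟨0, 0, 0, by simp⟩
  | mul x y hx hy ihx ihy =>
      obtain ⟨i, j, k, rfl⟩ := ihx
      obtain ⟨i', j', k', rfl⟩ := ihy
      exact ⟨i + i', j + j', k + k', triple_mul (a := a) hb hc i j k i' j' k'⟩
  | inv x hx ih =>
      obtain ⟨i, j, k, rfl⟩ := ih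
      exact ⟨-i, -j, -k,
        inv_eq_of_mul_eq_one_right (by rw [triple_mul (a := a) hb hc]; simp)⟩

private lemma commutator_central {D : Type*} [Group D] {c d : D}
    (hc : c ∈ Subgroup.center D) (hd : d ∈ Subgroup.center D) (x y : D) :
    (x * c)⁻¹ * (y * d)⁻¹ * (x * c) * (y * d) = x⁻¹ * y⁻¹ * x * y := by
  have hc' : c⁻¹ ∈ Subgroup.center D := (Subgroup.center D).inv_mem hc
  calc (x * c)⁻¹ * (y * d)⁻¹ * (x * c) * (y * d)
      = c⁻¹ * (x⁻¹ * (d⁻¹ * (y⁻¹ * (x * (c * (y * d)))))) := by simp [mul_inv_rev, mul_assoc]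
    _ = c⁻¹ * (x⁻¹ * (d⁻¹ * (y⁻¹ * (c * (x * (y * d)))))) := by rw [conj_central hc x]
    _ = c⁻¹ * (c * (x⁻¹ * (d⁻¹ * (y⁻¹ * (x * (y * d)))))) := by
        rw [conj_central hc y⁻¹, conj_central hc d⁻¹, conj_central hc x⁻¹]
    _ = x⁻¹ * (d⁻¹ * (y⁻¹ * (x * (y * d)))) := by rw [inv_mul_cancel_left]
    _ = x⁻¹ * (d⁻¹ * (y⁻¹ * (x * (d * y)))) := by rw [Subgroup.mem_center_iff.mp hd y]
    _ = x⁻¹ * (d⁻¹ * (d * (y⁻¹ * (x * y)))) := by rw [conj_central hd x, conj_central hd y⁻¹]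
    _ = x⁻¹ * (y⁻¹ * (x * y)) := by rw [inv_mul_cancel_left]
    _ = x⁻¹ * y⁻¹ * x * y := by simp [mul_assoc]

theorem exponent_normalization (p : ℕ) (hp : p.Prime) (D : Type*) [Group D]
    (x y t₁ z₂ z₃ : D) (m₁ : ℕ) (hm₁ : 1 ≤ m₁)
    (hgen : Subgroup.closure (({x, y} : Set D) ∪ (Subgroup.center D : Set D)) = ⊤)
    (hZ : Subgroup.center D = Subgroup.closure {t₁, z₂, z₃})
    (hmeet₁ : Subgroup.zpowers t₁ ⊓ Subgroup.closure {z₂, z₃} = ⊥)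
    (hmeet₂ : Subgroup.zpowers z₂ ⊓ Subgroup.closure {t₁, z₃} = ⊥)
    (hmeet₃ : Subgroup.zpowers z₃ ⊓ Subgroup.closure {t₁, z₂} = ⊥)
    (hord : orderOf t₁ = p ^ m₁)
    (hs : x⁻¹ * y⁻¹ * x * y = t₁ ^ p ^ (m₁ - 1))
    (hz₂ : (∃ k, orderOf z₂ = p ^ k) ∨ ¬ IsOfFinOrder z₂)
    (hz₃ : (∃ k, orderOf z₃ = p ^ k) ∨ ¬ IsOfFinOrder z₃)
    (hxp : x ^ p ∈ Subgroup.closure {t₁, z₂})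
    (hyp : y ^ p ∈ Subgroup.center D) :
    ∃ x' y' : D,
      Subgroup.closure (({x', y'} : Set D) ∪ (Subgroup.center D : Set D)) = ⊤ ∧
      x'⁻¹ * y'⁻¹ * x' * y' = t₁ ^ p ^ (m₁ - 1) ∧
      ∃ α β γ δ ε : ℕ, α < p ∧ β < p ∧ γ < p ∧ δ < p ∧ ε < p ∧
        x' ^ p = t₁ ^ α * z₂ ^ β ∧
        y' ^ p = t₁ ^ γ * z₂ ^ ε * z₃ ^ δ := by
  have hppos : (0:ℤ) < (p:ℤ) := by exact_mod_cast hp.pos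
  have ht₁ : t₁ ∈ Subgroup.center D := by
    rw [hZ]; exact Subgroup.subset_closure (by simp)
  have hz₂c : z₂ ∈ Subgroup.center D := by
    rw [hZ]; exact Subgroup.subset_closure (by simp)
  have hz₃c : z₃ ∈ Subgroup.center D := by
    rw [hZ]; exact Subgroup.subset_closure (by simp)
  obtain ⟨A, B, hxAB⟩ := mem_closure_pair' hz₂c hxp
  rw [hZ] at hyp
  obtain ⟨C, E, F, hyCEF⟩ := mem_closure_triple' hz₂c hz₃c hyp
  set u : ℤ := -(A / (p:ℤ)) with hu
  set v : ℤ := -(B / (p:ℤ)) with hv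
  set u' : ℤ := -(C / (p:ℤ)) with hu'
  set v' : ℤ := -(E / (p:ℤ)) with hv'
  set w' : ℤ := -(F / (p:ℤ)) with hw'
  set cx : D := t₁ ^ u * z₂ ^ v with hcxdef
  set cy : D := t₁ ^ u' * z₂ ^ v' * z₃ ^ w' with hcydef
  have hcx : cx ∈ Subgroup.center D :=
    mul_mem (Subgroup.zpow_mem _ ht₁ u) (Subgroup.zpow_mem _ hz₂c v)
  have hcy : cy ∈ Subgroup.center D :=
    mul_mem (mul_mem (Subgroup.zpow_mem _ ht₁ u') (Subgroup.zpow_mem _ hz₂c v'))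
      (Subgroup.zpow_mem _ hz₃c w')
  refine ⟨x * cx, y * cy, ?_, ?_, ?_⟩
  · -- generation
    apply le_antisymm le_top
    rw [← hgen, Subgroup.closure_le]
    have hx'mem : x * cx ∈ Subgroup.closure (({x * cx, y * cy} : Set D) ∪ (Subgroup.center D : Set D)) :=
      Subgroup.subset_closure (Or.inl (by simp))
    have hy'mem : y * cy ∈ Subgroup.closure (({x * cx, y * cy} : Set D) ∪ (Subgroup.center D : Set D)) :=
      Subgroup.subset_closure (Or.inl (by simp))
    have hcxm : cx ∈ Subgroup.closure (({x * cx, y * cy} : Set D) ∪ (Subgroup.center D : Set D)) :=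
      Subgroup.subset_closure (Or.inr hcx)
    have hcym : cy ∈ Subgroup.closure (({x * cx, y * cy} : Set D) ∪ (Subgroup.center D : Set D)) :=
      Subgroup.subset_closure (Or.inr hcy)
    rintro g (hg | hg)
    · simp only [Set.mem_insert_iff, Set.mem_singleton_iff] at hg
      rcases hg with rfl | rfl
      · simpa using mul_mem hx'mem (inv_mem hcxm)
      · simpa using mul_mem hy'mem (inv_mem hcym)
    · exact Subgroup.subset_closure (Or.inr hg)
  · -- commutator
    exact (commutator_central hcx hcy x y).trans hs
  · -- exponents
    have hA0 : 0 ≤ A % (p:ℤ) := Int.emod_nonneg A (ne_of_gt hppos)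
    have hA1 : A % (p:ℤ) < p := Int.emod_lt_of_pos A hppos
    have hB0 : 0 ≤ B % (p:ℤ) := Int.emod_nonneg B (ne_of_gt hppos)
    have hB1 : B % (p:ℤ) < p := Int.emod_lt_of_pos B hppos
    have hC0 : 0 ≤ C % (p:ℤ) := Int.emod_nonneg C (ne_of_gt hppos)
    have hC1 : C % (p:ℤ) < p := Int.emod_lt_of_pos C hppos
    have hE0 : 0 ≤ E % (p:ℤ) := Int.emod_nonneg E (ne_of_gt hppos)
    have hE1 : E % (p:ℤ) < p := Int.emod_lt_of_pos E hppos
    have hF0 : 0 ≤ F % (p:ℤ) := Int.emod_nonneg F (ne_of_gt hppos)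
    have hF1 : F % (p:ℤ) < p := Int.emod_lt_of_pos F hppos
    refine ⟨(A % (p:ℤ)).toNat, (B % (p:ℤ)).toNat, (C % (p:ℤ)).toNat,
      (F % (p:ℤ)).toNat, (E % (p:ℤ)).toNat, by omega, by omega, by omega, by omega, by omega,
      ?_, ?_⟩
    · -- x'^p
      have hxc : Commute x cx := Subgroup.mem_center_iff.mp hcx x
      have hc2 : Commute (t₁ ^ u) (z₂ ^ v) :=
        Subgroup.mem_center_iff.mp (Subgroup.zpow_mem _ hz₂c v) (t₁ ^ u)
      have hcxp : cx ^ p = t₁ ^ (u * p) * z₂ ^ (v * p) := by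
        rw [hcxdef, hc2.mul_pow, ← zpow_natCast (t₁ ^ u), ← zpow_natCast (z₂ ^ v),
          ← zpow_mul, ← zpow_mul]
      calc (x * cx) ^ p = x ^ p * cx ^ p := hxc.mul_pow p
        _ = (t₁ ^ A * z₂ ^ B) * (t₁ ^ (u * p) * z₂ ^ (v * p)) := by rw [hxAB, hcxp]
        _ = t₁ ^ (A + u * p) * z₂ ^ (B + v * p) := pair_mul (a := t₁) hz₂c A B _ _
        _ = t₁ ^ (A % (p:ℤ)) * z₂ ^ (B % (p:ℤ)) := by
            rw [show A + u * p = A % (p:ℤ) by rw [Int.emod_def]; rw [hu]; ring,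
              show B + v * p = B % (p:ℤ) by rw [Int.emod_def]; rw [hv]; ring]
        _ = t₁ ^ (A % (p:ℤ)).toNat * z₂ ^ (B % (p:ℤ)).toNat := by
            rw [← zpow_natCast t₁ (A % (p:ℤ)).toNat, ← zpow_natCast z₂ (B % (p:ℤ)).toNat,
              Int.toNat_of_nonneg hA0, Int.toNat_of_nonneg hB0]
    · -- y'^p
      have hyc : Commute y cy := Subgroup.mem_center_iff.mp hcy y
      have hc2 : Commute (t₁ ^ u') (z₂ ^ v') :=
        Subgroup.mem_center_iff.mp (Subgroup.zpow_mem _ hz₂c v') (t₁ ^ u')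
      have hc3 : Commute (t₁ ^ u' * z₂ ^ v') (z₃ ^ w') :=
        Subgroup.mem_center_iff.mp (Subgroup.zpow_mem _ hz₃c w') (t₁ ^ u' * z₂ ^ v')
      have hcyp : cy ^ p = t₁ ^ (u' * p) * z₂ ^ (v' * p) * z₃ ^ (w' * p) := by
        rw [hcydef, hc3.mul_pow, hc2.mul_pow, ← zpow_natCast (t₁ ^ u'),
          ← zpow_natCast (z₂ ^ v'), ← zpow_natCast (z₃ ^ w'), ← zpow_mul, ← zpow_mul, ← zpow_mul]
      calc (y * cy) ^ p = y ^ p * cy ^ p := hyc.mul_pow p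
        _ = (t₁ ^ C * z₂ ^ E * z₃ ^ F) * (t₁ ^ (u' * p) * z₂ ^ (v' * p) * z₃ ^ (w' * p)) := by
            rw [hyCEF, hcyp]
        _ = t₁ ^ (C + u' * p) * z₂ ^ (E + v' * p) * z₃ ^ (F + w' * p) :=
            triple_mul (a := t₁) hz₂c hz₃c C E F _ _ _
        _ = t₁ ^ (C % (p:ℤ)) * z₂ ^ (E % (p:ℤ)) * z₃ ^ (F % (p:ℤ)) := by
            rw [show C + u' * p = C % (p:ℤ) by rw [Int.emod_def]; rw [hu']; ring,
              show E + v' * p = E % (p:ℤ) by rw [Int.emod_def]; rw [hv']; ring,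
              show F + w' * p = F % (p:ℤ) by rw [Int.emod_def]; rw [hw']; ring]
        _ = t₁ ^ (C % (p:ℤ)).toNat * z₂ ^ (E % (p:ℤ)).toNat * z₃ ^ (F % (p:ℤ)).toNat := by
            rw [← zpow_natCast t₁ (C % (p:ℤ)).toNat, ← zpow_natCast z₂ (E % (p:ℤ)).toNat,
              ← zpow_natCast z₃ (F % (p:ℤ)).toNat, Int.toNat_of_nonneg hC0,
              Int.toNat_of_nonneg hE0, Int.toNat_of_nonneg hF0]
end

section
/- Let p be a prime and let G be a group such that G/Z(G) ≅ C_p × C_p. Then the commutator subgroup of G is cyclic of order p; more precisely, if x, y ∈ G are elements whose images generate G/Z(G), then every commutator in G is a power of s = [x,y], and s has order p. -/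
/-! Since `G ⧸ center G` is abelian, every commutator is central, so `a ↦ ⁅a, b⁆` is a
homomorphism vanishing on the center. A subgroup containing the center and lifts of generators
of `G ⧸ center G` is everything, so commutators with a generator, and then all commutators, lie
in `⟨⁅x, y⁆⟩`. Moreover `⁅x, y⁆ ^ p = ⁅x ^ p, y⁆ = 1` because `x ^ p` is central, and
`⁅x, y⁆ ≠ 1` because `G` is not abelian. In a group of class two, `x⁻¹ * y⁻¹ * x * y` agrees with
Mathlib's `⁅x, y⁆ = x * y * x⁻¹ * y⁻¹`. -/

open Subgroup
open scoped commutatorElement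

section QuotientGenerators

variable {G : Type*} [Group G] {N H : Subgroup G} [N.Normal]

theorem Subgroup.eq_top_of_le_of_closure_image_mk_eq_top (hN : N ≤ H) {s : Set G}
    (hs : closure (((↑) : G → G ⧸ N) '' s) = ⊤) (hsH : s ⊆ H) : H = ⊤ := by
  have hmap : H.map (QuotientGroup.mk' N) = ⊤ := by
    rw [eq_top_iff, ← hs, closure_le]
    rintro _ ⟨g, hg, rfl⟩
    exact ⟨g, hsH hg, rfl⟩
  calc H = H ⊔ (QuotientGroup.mk' N).ker := by rw [QuotientGroup.ker_mk', sup_eq_left.mpr hN]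
    _ = ⊤ := by rw [← comap_map_eq, hmap, comap_top]

theorem commutatorElement_mem_of_quotient_commute (hN : ∀ u v : G ⧸ N, Commute u v) (a b : G) :
    ⁅a, b⁆ ∈ N := by
  rw [← QuotientGroup.eq_one_iff, ← QuotientGroup.mk'_apply, map_commutatorElement]
  exact (hN _ _).commutator_eq

end QuotientGenerators

section CommutatorsCentral

variable {G : Type*} [Group G] (hc : ∀ a b : G, ⁅a, b⁆ ∈ center G)
include hc

theorem commutatorElement_mul_left_of_mem_center (a b c : G) :
    ⁅a * b, c⁆ = ⁅a, c⁆ * ⁅b, c⁆ := by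
  rw [commutatorElement_mul_left_eq_conj_mul, mem_center_iff.mp (hc b c) a,
    mul_inv_cancel_right]
  exact (mem_center_iff.mp (hc b c) _).symm

def commutatorElementLeftHom (b : G) : G →* G :=
  MonoidHom.mk' (⁅·, b⁆) fun a a' => commutatorElement_mul_left_of_mem_center hc a a' b

theorem commutatorElement_pow_left_of_mem_center (a b : G) (n : ℕ) : ⁅a ^ n, b⁆ = ⁅a, b⁆ ^ n :=
  map_pow (commutatorElementLeftHom hc b) a n

theorem commutatorElement_inv_left_of_mem_center (a b : G) : ⁅a⁻¹, b⁆ = ⁅a, b⁆⁻¹ :=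
  map_inv (commutatorElementLeftHom hc b) a

theorem commutatorElement_eq_inv_mul_inv_mul_mul_of_mem_center (a b : G) :
    ⁅a, b⁆ = a⁻¹ * b⁻¹ * a * b := by
  calc ⁅a, b⁆ = ⁅a⁻¹, b⁻¹⁆ := by
        rw [commutatorElement_inv_left_of_mem_center hc, commutatorElement_inv,
          commutatorElement_inv_left_of_mem_center hc, commutatorElement_inv]
    _ = a⁻¹ * b⁻¹ * a * b := by rw [commutatorElement_def, inv_inv, inv_inv]

theorem commutatorElement_mem_of_forall_mem_of_closure_eq_top {K : Subgroup G} {s : Set G}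
    (hs : closure (((↑) : G → G ⧸ center G) '' s) = ⊤) (b : G) (hb : ∀ g ∈ s, ⁅g, b⁆ ∈ K)
    (a : G) : ⁅a, b⁆ ∈ K := by
  suffices h : K.comap (commutatorElementLeftHom hc b) = ⊤ from (eq_top_iff' _).mp h a
  refine eq_top_of_le_of_closure_image_mk_eq_top (fun z hz => ?_) hs hb
  change ⁅z, b⁆ ∈ K
  rw [Commute.commutator_eq (mem_center_iff.mp hz b).symm]
  exact K.one_mem

theorem commutatorElement_mem_zpowers {x y : G}
    (hxy : closure {(x : G ⧸ center G), (y : G ⧸ center G)} = ⊤) (a b : G) :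
    ⁅a, b⁆ ∈ zpowers ⁅x, y⁆ := by
  rw [← Set.image_pair] at hxy
  have hgen : ∀ g ∈ ({x, y} : Set G), ∀ h ∈ ({x, y} : Set G), ⁅g, h⁆ ∈ zpowers ⁅x, y⁆ := by
    rintro g (rfl | rfl) h (rfl | rfl)
    · simpa only [commutatorElement_self] using one_mem _
    · exact mem_zpowers _
    · rw [← commutatorElement_inv, zpowers_inv]; exact mem_zpowers _
    · simpa only [commutatorElement_self] using one_mem _
  have hright : ∀ g ∈ ({x, y} : Set G), ∀ c, ⁅c, g⁆ ∈ zpowers ⁅x, y⁆ := fun g hg =>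
    commutatorElement_mem_of_forall_mem_of_closure_eq_top hc hxy g fun h hh => hgen h hh g hg
  refine commutatorElement_mem_of_forall_mem_of_closure_eq_top hc hxy b (fun g hg => ?_) a
  simpa only [commutatorElement_inv] using inv_mem (hright g hg b)

theorem commutator_eq_zpowers {x y : G}
    (hxy : closure {(x : G ⧸ center G), (y : G ⧸ center G)} = ⊤) :
    commutator G = zpowers ⁅x, y⁆ := by
  refine le_antisymm ?_ ?_
  · rw [commutator_def, commutator_le]
    exact fun a _ b _ => commutatorElement_mem_zpowers hc hxy a b
  · rw [zpowers_le, commutator_def]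
    exact commutator_mem_commutator (mem_top x) (mem_top y)

theorem orderOf_commutatorElement_of_closure_eq_top {p : ℕ} [Fact p.Prime]
    (hp : ∀ a : G, a ^ p ∈ center G) [Nontrivial (G ⧸ center G)] {x y : G}
    (hxy : closure {(x : G ⧸ center G), (y : G ⧸ center G)} = ⊤) : orderOf ⁅x, y⁆ = p := by
  refine orderOf_eq_prime ?_ fun h1 => ?_
  · rw [← commutatorElement_pow_left_of_mem_center hc]
    exact Commute.commutator_eq (mem_center_iff.mp (hp x) y).symm
  · have hab : commutator G = ⊥ := by
      rw [commutator_eq_zpowers hc hxy, h1, zpowers_one_eq_bot]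
    rw [commutator_def, commutator_top_left_eq_bot_iff_le_center] at hab
    obtain ⟨q, hq⟩ := exists_ne (1 : G ⧸ center G)
    induction q using QuotientGroup.induction_on with
    | H g => exact hq ((QuotientGroup.eq_one_iff g).mpr (hab (mem_top g)))

end CommutatorsCentral

theorem Subgroup.exists_closure_pair_eq_top_prod (A B : Type*) [Group A] [Group B]
    [IsCyclic A] [IsCyclic B] : ∃ u v : A × B, closure {u, v} = ⊤ := by
  obtain ⟨a, ha⟩ := IsCyclic.exists_generator (α := A)
  obtain ⟨b, hb⟩ := IsCyclic.exists_generator (α := B)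
  refine ⟨(a, 1), (1, b), (eq_top_iff' _).mpr fun ⟨c, d⟩ => ?_⟩
  obtain ⟨i, rfl⟩ := mem_zpowers_iff.mp (ha c)
  obtain ⟨j, rfl⟩ := mem_zpowers_iff.mp (hb d)
  have hdecomp : ((a ^ i, b ^ j) : A × B) = (a, 1) ^ i * (1, b) ^ j := by simp
  rw [hdecomp]
  exact mul_mem (zpow_mem (subset_closure (by simp)) i) (zpow_mem (subset_closure (by simp)) j)

theorem Subgroup.closure_pair_map_eq_top {H K : Type*} [Group H] [Group K] (f : H →* K)
    (hf : Function.Surjective f) {u v : H} (huv : closure {u, v} = ⊤) :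
    closure {f u, f v} = ⊤ := by
  rw [← Set.image_pair, ← MonoidHom.map_closure, huv, ← MonoidHom.range_eq_map,
    MonoidHom.range_eq_top.mpr hf]

theorem commutator_subgroup_cyclic_of_order_p (p : ℕ) (hp : p.Prime)
    (G : Type*) [Group G]
    (hq : Nonempty ((G ⧸ Subgroup.center G) ≃*
      Multiplicative (ZMod p) × Multiplicative (ZMod p))) :
    IsCyclic ↥(commutator G) ∧ Nat.card ↥(commutator G) = p ∧
    ∀ x y : G,
      Subgroup.closure {(x : G ⧸ Subgroup.center G), (y : G ⧸ Subgroup.center G)} = ⊤ →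
      (∀ a b : G, ∃ k : ℤ, a⁻¹ * b⁻¹ * a * b = (x⁻¹ * y⁻¹ * x * y) ^ k) ∧
      orderOf (x⁻¹ * y⁻¹ * x * y) = p := by
  have := Fact.mk hp
  obtain ⟨e⟩ := hq
  have : Nontrivial (G ⧸ center G) := e.toEquiv.nontrivial
  have hc : ∀ a b : G, ⁅a, b⁆ ∈ center G := commutatorElement_mem_of_quotient_commute
    fun u v => e.injective (by rw [map_mul, map_mul, mul_comm])
  have hexp : ∀ a : G, a ^ p ∈ center G := fun a => by
    rw [← QuotientGroup.eq_one_iff, QuotientGroup.mk_pow]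
    exact e.injective (by rw [map_pow, map_one]; ext <;> simp)
  obtain ⟨x₀, y₀, hxy₀⟩ : ∃ x y : G, closure {(x : G ⧸ center G), (y : G ⧸ center G)} = ⊤ := by
    obtain ⟨u, v, huv⟩ := exists_closure_pair_eq_top_prod
      (Multiplicative (ZMod p)) (Multiplicative (ZMod p))
    obtain ⟨x, hx⟩ := QuotientGroup.mk_surjective (e.symm u)
    obtain ⟨y, hy⟩ := QuotientGroup.mk_surjective (e.symm v)
    exact ⟨x, y, hx ▸ hy ▸ closure_pair_map_eq_top e.symm.toMonoidHom e.symm.surjective huv⟩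
  simp only [← commutatorElement_eq_inv_mul_inv_mul_mul_of_mem_center hc]
  rw [commutator_eq_zpowers hc hxy₀, Nat.card_zpowers]
  refine ⟨inferInstance, orderOf_commutatorElement_of_closure_eq_top hc hexp hxy₀,
    fun x y hxy => ⟨fun a b => ?_, orderOf_commutatorElement_of_closure_eq_top hc hexp hxy⟩⟩
  obtain ⟨k, hk⟩ := mem_zpowers_iff.mp (commutatorElement_mem_zpowers hc hxy a b)
  exact ⟨k, hk.symm⟩
end

section
/- Let p be a prime. Every group belonging to family 𝒢₁ or to family 𝒢₂ is indecomposable. -/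
/-- A group is indecomposable if whenever it is the internal direct product of two
subgroups `H` and `K`, one of them is trivial. -/
def IsIndecomposable (G : Type*) [Group G] : Prop :=
  ∀ H K : Subgroup G,
    (∀ h ∈ H, ∀ k ∈ K, Commute h k) →
    H ⊓ K = ⊥ →
    (∀ g : G, ∃ h ∈ H, ∃ k ∈ K, g = h * k) →
    H = ⊥ ∨ K = ⊥

/-- Membership in family 𝒢₁: `G = ⟨x, y, t₁⟩`, `Z(G) = ⟨t₁⟩`, `o(t₁) = p^{m₁}`,
`x^p = y^p = 1`, `[x,y] = t₁^{p^{m₁-1}}`. -/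
def InFamilyG1 (p m₁ : ℕ) (G : Type*) [Group G] : Prop :=
  ∃ x y t₁ : G,
    Subgroup.closure {x, y, t₁} = ⊤ ∧
    Subgroup.center G = Subgroup.zpowers t₁ ∧
    orderOf t₁ = p ^ m₁ ∧
    x ^ p = 1 ∧ y ^ p = 1 ∧
    x⁻¹ * y⁻¹ * x * y = t₁ ^ p ^ (m₁ - 1)

/-- Membership in family 𝒢₂: as 𝒢₁ but with `x^p = y^p = t₁`. -/
def InFamilyG2 (p m₁ : ℕ) (G : Type*) [Group G] : Prop :=
  ∃ x y t₁ : G,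
    Subgroup.closure {x, y, t₁} = ⊤ ∧
    Subgroup.center G = Subgroup.zpowers t₁ ∧
    orderOf t₁ = p ^ m₁ ∧
    x ^ p = t₁ ∧ y ^ p = t₁ ∧
    x⁻¹ * y⁻¹ * x * y = t₁ ^ p ^ (m₁ - 1)


open Subgroup

/-- In a cyclic `p`-group `⟨t⟩`, any nontrivial element generates a subgroup
containing `t ^ p ^ (m-1)`. -/
lemma aux_mem_zpowers {G : Type*} [Group G] {p m : ℕ} (hp : p.Prime) (hm : 1 ≤ m) {t : G}
    (ho : orderOf t = p ^ m) {a : G} (ha : a ∈ zpowers t) (ha1 : a ≠ 1) :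
    t ^ p ^ (m - 1) ∈ zpowers a := by
  have hdvd : orderOf a ∣ p ^ m := ho ▸ orderOf_dvd_of_mem_zpowers ha
  obtain ⟨k, hkm, hoa⟩ := (Nat.dvd_prime_pow hp).mp hdvd
  have hk1 : 1 ≤ k := by
    rcases Nat.eq_zero_or_pos k with h0 | h; swap; · exact h
    exact absurd (orderOf_eq_one_iff.mp (by rw [hoa, h0, pow_zero])) ha1
  set c := a ^ p ^ (k - 1) with hc
  have hoc : orderOf c = p := by
    rw [hc, orderOf_pow' a (pow_ne_zero _ hp.pos.ne'), hoa,
      Nat.gcd_eq_right (pow_dvd_pow p (Nat.sub_le k 1))]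
    have : p ^ k = p ^ (k - 1) * p := by
      rw [← pow_succ, Nat.sub_add_cancel hk1]
    rw [this, Nat.mul_div_cancel_left _ (pow_pos hp.pos _)]
  have hc1 : c ≠ 1 := by
    intro h; rw [h, orderOf_one] at hoc; exact hp.one_lt.ne' hoc.symm
  -- c ∈ zpowers t, c^p = 1, so c = s^u where s = t^(p^(m-1))
  obtain ⟨j, hj0⟩ := (zpowers t).pow_mem ha (p ^ (k - 1))
  have hj : t ^ j = c := by rw [hc]; exact hj0
  have hcp : c ^ (p : ℤ) = 1 := by
    rw [zpow_natCast, ← hoc]; exact pow_orderOf_eq_one c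
  have hdiv : ((p : ℤ) ^ (m - 1)) ∣ j := by
    have h1 : t ^ (j * (p : ℤ)) = (1 : G) := by
      rw [zpow_mul, hj]; exact hcp
    have h2 : ((p : ℤ) ^ m) ∣ j * p := by
      have h := orderOf_dvd_iff_zpow_eq_one.mpr h1
      rw [ho] at h; exact_mod_cast h
    have h3 : ((p : ℤ) ^ (m - 1) * p) ∣ j * p := by
      rwa [← pow_succ, Nat.sub_add_cancel hm]
    exact (mul_dvd_mul_iff_right (by exact_mod_cast hp.pos.ne')).mp h3
  obtain ⟨u, hu⟩ := hdiv
  set s := t ^ p ^ (m - 1) with hs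
  have hsu : s ^ u = c := by
    have hs' : s = t ^ ((p:ℤ) ^ (m - 1)) := by
      rw [hs, ← zpow_natCast]; norm_cast
    rw [hs', ← zpow_mul, ← hu, hj]
  have hsp : s ^ (p : ℤ) = 1 := by
    rw [hs, zpow_natCast, ← pow_mul, ← pow_succ, Nat.sub_add_cancel hm, ← ho]
    exact pow_orderOf_eq_one t
  have hpu : ¬ ((p : ℤ) ∣ u) := by
    rintro ⟨v, rfl⟩
    apply hc1
    rw [← hsu, zpow_mul, hsp, one_zpow]
  have hcop : IsCoprime (p : ℤ) u :=
    (Int.prime_iff_natAbs_prime.mpr (by simpa using hp)).coprime_iff_not_dvd.mpr hpu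
  obtain ⟨α, β, hαβ⟩ := hcop
  have : s = c ^ β := by
    calc s = s ^ (α * p + β * u) := by
            rw [show α * (p:ℤ) + β * u = 1 from hαβ, zpow_one]
      _ = (s ^ (p:ℤ)) ^ α * (s ^ u) ^ β := by
            rw [← zpow_mul, ← zpow_mul, ← zpow_add, mul_comm (p:ℤ) α, mul_comm u β]
      _ = c ^ β := by rw [hsp, one_zpow, hsu, one_mul]
  rw [this]
  exact (zpowers a).zpow_mem
    (by rw [hc]; exact (zpowers a).pow_mem (mem_zpowers a) _) β

/-- Two subgroups of a cyclic `p`-group with trivial intersection: one is trivial. -/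
lemma aux_chain {G : Type*} [Group G] {p m : ℕ} (hp : p.Prime) (hm : 1 ≤ m) {t : G}
    (ho : orderOf t = p ^ m) {A B : Subgroup G} (hA : A ≤ zpowers t) (hB : B ≤ zpowers t)
    (hAB : A ⊓ B = ⊥) : A = ⊥ ∨ B = ⊥ := by
  by_contra hcon
  push_neg at hcon
  obtain ⟨⟨a, haA⟩, ha1'⟩ := (Subgroup.ne_bot_iff_exists_ne_one.mp hcon.1)
  obtain ⟨⟨b, hbB⟩, hb1'⟩ := (Subgroup.ne_bot_iff_exists_ne_one.mp hcon.2)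
  have ha1 : a ≠ 1 := by simpa [Subtype.ext_iff] using ha1'
  have hb1 : b ≠ 1 := by simpa [Subtype.ext_iff] using hb1'
  have hsa := aux_mem_zpowers hp hm ho (hA haA) ha1
  have hsb := aux_mem_zpowers hp hm ho (hB hbB) hb1
  have hsA : t ^ p ^ (m - 1) ∈ A := (zpowers_le.mpr haA) hsa
  have hsB : t ^ p ^ (m - 1) ∈ B := (zpowers_le.mpr hbB) hsb
  have : t ^ p ^ (m - 1) = 1 := by
    have := hAB ▸ (Subgroup.mem_inf.mpr ⟨hsA, hsB⟩)
    simpa using this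
  have : orderOf t ∣ p ^ (m - 1) := orderOf_dvd_of_pow_eq_one this
  rw [ho] at this
  have := Nat.le_of_dvd (pow_pos hp.pos _) this
  have := (pow_lt_pow_iff_right₀ hp.one_lt).mpr (Nat.sub_lt hm Nat.one_pos)
  omega

/-- The asymmetric core: if `K` meets the center trivially, then `K = ⊥`. -/
lemma aux_core {G : Type*} [Group G] (x y t₁ : G) (N : ℕ)
    (hcl : closure {x, y, t₁} = ⊤)
    (hZ : Subgroup.center G = zpowers t₁)
    (hxy : x⁻¹ * y⁻¹ * x * y = t₁ ^ N)
    (H K : Subgroup G)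
    (hcomm : ∀ h ∈ H, ∀ k ∈ K, Commute h k)
    (hinf : H ⊓ K = ⊥)
    (hsurj : ∀ g : G, ∃ h ∈ H, ∃ k ∈ K, g = h * k)
    (hKZ : K ⊓ Subgroup.center G = ⊥) : K = ⊥ := by
  classical
  -- the K-part projection
  have huniq : ∀ (h₁ k₁ h₂ k₂ : G), h₁ ∈ H → k₁ ∈ K → h₂ ∈ H → k₂ ∈ K →
      h₁ * k₁ = h₂ * k₂ → k₁ = k₂ := by
    intro h₁ k₁ h₂ k₂ hh₁ hk₁ hh₂ hk₂ he
    have h1 : h₂⁻¹ * h₁ = k₂ * k₁⁻¹ := by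
      calc h₂⁻¹ * h₁ = h₂⁻¹ * (h₁ * k₁) * k₁⁻¹ := by group
        _ = h₂⁻¹ * (h₂ * k₂) * k₁⁻¹ := by rw [he]
        _ = k₂ * k₁⁻¹ := by group
    have hmem : h₂⁻¹ * h₁ ∈ H ⊓ K :=
      Subgroup.mem_inf.mpr ⟨H.mul_mem (H.inv_mem hh₂) hh₁,
        h1 ▸ K.mul_mem hk₂ (K.inv_mem hk₁)⟩
    rw [hinf, Subgroup.mem_bot] at hmem
    have : k₂ * k₁⁻¹ = 1 := h1 ▸ hmem
    have := mul_inv_eq_one.mp this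
    exact this.symm
  choose hpart hH kpart hKmem hdecomp using hsurj
  have hfk : ∀ k ∈ K, kpart k = k := by
    intro k hk
    exact huniq (hpart k) (kpart k) 1 k (hH k) (hKmem k) H.one_mem hk
      (by rw [one_mul, ← hdecomp k])
  have hmul : ∀ a b : G, kpart (a * b) = kpart a * kpart b := by
    intro a b
    apply huniq (hpart (a*b)) _ (hpart a * hpart b) _ (hH (a*b))
      (hKmem (a*b)) (H.mul_mem (hH a) (hH b)) (K.mul_mem (hKmem a) (hKmem b))
    calc hpart (a*b) * kpart (a*b) = a * b := (hdecomp _).symm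
      _ = (hpart a * kpart a) * (hpart b * kpart b) := by
          rw [← hdecomp a, ← hdecomp b]
      _ = (hpart a * hpart b) * (kpart a * kpart b) :=
          ((hcomm _ (hH b) _ (hKmem a)).symm).mul_mul_mul_comm _ _
  let F : G →* G := MonoidHom.mk' kpart hmul
  -- kpart t₁ is central, hence trivial
  have ht₁c : t₁ ∈ Subgroup.center G := hZ ▸ mem_zpowers t₁
  have hkt₁ : kpart t₁ = 1 := by
    have hcen : kpart t₁ ∈ Subgroup.center G := by
      rw [Subgroup.mem_center_iff]
      intro g
      obtain ⟨h, hh, k, hk, rfl⟩ : ∃ h ∈ H, ∃ k ∈ K, g = h * k :=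
        ⟨hpart g, hH g, kpart g, hKmem g, hdecomp g⟩
      have c1 : Commute h (kpart t₁) := hcomm h hh _ (hKmem t₁)
      have c2 : Commute k (kpart t₁) := by
        have ckt : Commute k t₁ := Subgroup.mem_center_iff.mp ht₁c k
        have ckh : Commute k (hpart t₁) := (hcomm _ (hH t₁) k hk).symm
        have : kpart t₁ = (hpart t₁)⁻¹ * t₁ :=
          eq_inv_mul_iff_mul_eq.mpr (hdecomp t₁).symm
        rw [this]
        exact ckh.inv_right.mul_right ckt
      calc h * k * kpart t₁ = h * (k * kpart t₁) := by rw [mul_assoc]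
          _ = h * (kpart t₁ * k) := by rw [c2.eq]
          _ = (h * kpart t₁) * k := by rw [mul_assoc]
          _ = (kpart t₁ * h) * k := by rw [c1.eq]
          _ = kpart t₁ * (h * k) := by rw [mul_assoc]
    have : kpart t₁ ∈ K ⊓ Subgroup.center G := Subgroup.mem_inf.mpr ⟨hKmem t₁, hcen⟩
    rw [hKZ, Subgroup.mem_bot] at this
    exact this
  -- kpart x and kpart y commute
  have hFxy : Commute (kpart x) (kpart y) := by
    have h1 : kpart (x⁻¹ * y⁻¹ * x * y) = kpart (t₁ ^ N) := by rw [hxy]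
    have h2 : (kpart x)⁻¹ * (kpart y)⁻¹ * kpart x * kpart y = 1 := by
      have e1 : kpart (x⁻¹ * y⁻¹ * x * y) =
          (kpart x)⁻¹ * (kpart y)⁻¹ * kpart x * kpart y := by
        have := map_mul F; have := map_inv F
        show F (x⁻¹ * y⁻¹ * x * y) = (F x)⁻¹ * (F y)⁻¹ * F x * F y
        simp [map_mul]
      have e2 : kpart (t₁ ^ N) = 1 := by
        show F (t₁ ^ N) = 1
        rw [map_pow]
        show (kpart t₁) ^ N = 1
        rw [hkt₁, one_pow]
      rw [← e1, h1, e2]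
    have : kpart x * kpart y = kpart y * kpart x := by
      have := congrArg (fun z => kpart y * (kpart x * z)) h2
      simpa [mul_assoc] using this
    exact this
  -- every element of K lies in the closure of the kpart-images
  set S : Set G := {kpart x, kpart y, kpart t₁} with hS
  have hmemS : ∀ k ∈ K, k ∈ closure S := by
    intro k hk
    have : k ∈ (⊤ : Subgroup G) := trivial
    rw [← hcl] at this
    have : F k ∈ Subgroup.map F (closure {x, y, t₁}) := Subgroup.mem_map_of_mem F this
    rw [MonoidHom.map_closure] at this
    have himg : (⇑F '' {x, y, t₁}) = S := by
      rw [hS]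
      simp only [Set.image_insert_eq, Set.image_singleton]
      rfl
    rw [himg] at this
    have hFk : F k = k := hfk k hk
    rwa [hFk] at this
  -- S consists of pairwise commuting elements, so closure S is abelian
  have hScomm : ∀ a ∈ S, ∀ b ∈ S, Commute a b := by
    intro a ha b hb
    simp only [hS, Set.mem_insert_iff, Set.mem_singleton_iff] at ha hb
    rcases ha with rfl | rfl | rfl <;> rcases hb with rfl | rfl | rfl <;>
      first
        | exact Commute.refl _
        | exact hFxy
        | exact hFxy.symm
        | (rw [hkt₁]; exact Commute.one_left _)
        | (rw [hkt₁]; exact Commute.one_right _)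
  have hstep1 : closure S ≤ Subgroup.centralizer S := by
    rw [closure_le]
    intro a ha
    rw [SetLike.mem_coe, Subgroup.mem_centralizer_iff]
    intro b hb
    exact (hScomm b hb a ha).eq
  have hstep2 : closure S ≤ Subgroup.centralizer (closure S : Subgroup G) := by
    rw [closure_le]
    intro a ha
    rw [SetLike.mem_coe, Subgroup.mem_centralizer_iff]
    intro b hb
    exact ((Subgroup.mem_centralizer_iff.mp (hstep1 hb)) a ha).symm
  have hKab : ∀ k₁ ∈ K, ∀ k₂ ∈ K, Commute k₁ k₂ := by
    intro k₁ hk₁ k₂ hk₂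
    exact (Subgroup.mem_centralizer_iff.mp (hstep2 (hmemS k₁ hk₁)) k₂
      (hmemS k₂ hk₂)).symm
  -- hence K is central
  have hKle : K ≤ Subgroup.center G := by
    intro k hk
    rw [Subgroup.mem_center_iff]
    intro g
    obtain ⟨h, hh, k', hk', rfl⟩ : ∃ h ∈ H, ∃ k' ∈ K, g = h * k' :=
      ⟨hpart g, hH g, kpart g, hKmem g, hdecomp g⟩
    have c1 : Commute h k := hcomm h hh k hk
    have c2 : Commute k' k := hKab k' hk' k hk
    calc h * k' * k = h * (k' * k) := by rw [mul_assoc]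
      _ = h * (k * k') := by rw [c2.eq]
      _ = (h * k) * k' := by rw [mul_assoc]
      _ = (k * h) * k' := by rw [c1.eq]
      _ = k * (h * k') := by rw [mul_assoc]
  rw [← hKZ]
  exact le_antisymm (le_inf le_rfl hKle) inf_le_left

lemma aux_main {G : Type*} [Group G] (p m₁ : ℕ) (hp : p.Prime) (hm : 1 ≤ m₁)
    (x y t₁ : G)
    (hcl : closure {x, y, t₁} = ⊤)
    (hZ : Subgroup.center G = zpowers t₁)
    (ho : orderOf t₁ = p ^ m₁)
    (hxy : x⁻¹ * y⁻¹ * x * y = t₁ ^ p ^ (m₁ - 1)) :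
    IsIndecomposable G := by
  intro H K hcomm hinf hsurj
  have hchain : H ⊓ Subgroup.center G = ⊥ ∨ K ⊓ Subgroup.center G = ⊥ := by
    apply aux_chain hp hm ho (A := H ⊓ Subgroup.center G) (B := K ⊓ Subgroup.center G)
    · exact le_trans inf_le_right (le_of_eq hZ)
    · exact le_trans inf_le_right (le_of_eq hZ)
    · rw [← le_bot_iff, ← hinf]
      exact le_inf (le_trans inf_le_left inf_le_left) (le_trans inf_le_right inf_le_left)
  rcases hchain with hHZ | hKZ
  · left
    apply aux_core x y t₁ (p ^ (m₁ - 1)) hcl hZ hxy K H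
      (fun k hk h hh => (hcomm h hh k hk).symm)
      (by rw [inf_comm]; exact hinf)
      (fun g => by
        obtain ⟨h, hh, k, hk, hg⟩ := hsurj g
        exact ⟨k, hk, h, hh, by rw [hg, (hcomm h hh k hk).eq]⟩)
      hHZ
  · right
    exact aux_core x y t₁ (p ^ (m₁ - 1)) hcl hZ hxy H K hcomm hinf hsurj hKZ

theorem familyG1_G2_indecomposable (p : ℕ) (hp : p.Prime) (G : Type*) [Group G]
    (h : (∃ m₁, 1 ≤ m₁ ∧ InFamilyG1 p m₁ G) ∨ (∃ m₁, 1 ≤ m₁ ∧ InFamilyG2 p m₁ G)) :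
    IsIndecomposable G := by
  rcases h with ⟨m₁, hm, x, y, t₁, hcl, hZ, ho, _, _, hxy⟩ |
    ⟨m₁, hm, x, y, t₁, hcl, hZ, ho, _, _, hxy⟩ <;>
  exact aux_main p m₁ hp hm x y t₁ hcl hZ ho hxy
end

section
/- Let p be a prime. If G₁ is a group belonging to family 𝒢₁ and G₂ is a group belonging to family 𝒢₂, then G₁ and G₂ are not isomorphic. -/
section Aux
variable {G : Type*} [Group G] {x y t : G} {k : ℤ}

private lemma conj_step (ht : ∀ g : G, Commute t g) {v : G} {j : ℤ}
    (hv : v * x * v⁻¹ = x * t ^ j) (e : ℤ) :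
    v * (x * t ^ e) * v⁻¹ = x * t ^ (j + e) := by
  have h1 : t ^ e * v⁻¹ = v⁻¹ * t ^ e := ((ht v⁻¹).zpow_left e).eq
  calc v * (x * t ^ e) * v⁻¹ = v * x * (t ^ e * v⁻¹) := by simp only [mul_assoc]
    _ = v * x * v⁻¹ * t ^ e := by rw [h1, ← mul_assoc]
    _ = x * t ^ j * t ^ e := by rw [hv]
    _ = x * t ^ (j + e) := by rw [mul_assoc, ← zpow_add]

private lemma key (ht : ∀ g : G, Commute t g) (v : G) (j : ℤ)
    (hv : v * x * v⁻¹ = x * t ^ j) :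
    ∀ n : ℕ, v ^ n * x * (v ^ n)⁻¹ = x * t ^ (j * n) := by
  intro n
  induction n with
  | zero => simp
  | succ n ih =>
      have e1 : v ^ (n+1) * x * (v ^ (n+1))⁻¹ = v * (v ^ n * x * (v ^ n)⁻¹) * v⁻¹ := by
        rw [pow_succ']; group
      rw [e1, ih, conj_step ht hv]
      congr 1
      push_cast
      ring

private lemma conj1 (ht : ∀ g : G, Commute t g) (h : y * x * y⁻¹ = x * t ^ k) :
    ∀ b : ℤ, y ^ b * x * y ^ (-b) = x * t ^ (k * b) := by
  have h' : y⁻¹ * x * y⁻¹⁻¹ = x * t ^ (-k) := by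
    rw [inv_inv]
    have e0 : y⁻¹ * (x * t ^ k) * y = x := by rw [← h]; group
    have hk : t ^ k * y = y * t ^ k := ((ht y).zpow_left k).eq
    have h3 : y⁻¹ * x * y * t ^ k = x := by
      conv_rhs => rw [← e0]
      simp only [mul_assoc, hk]
    calc y⁻¹ * x * y = y⁻¹ * x * y * t ^ k * t ^ (-k) := by
          rw [mul_assoc (y⁻¹ * x * y), ← zpow_add]; simp
      _ = x * t ^ (-k) := by rw [h3]
  intro b
  obtain ⟨n, rfl | rfl⟩ := Int.eq_nat_or_neg b
  · rw [zpow_natCast, zpow_neg, zpow_natCast]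
    exact key ht y k h n
  · have h2 := key ht y⁻¹ (-k) h' n
    rw [inv_pow, inv_inv] at h2
    rw [neg_neg, zpow_neg, zpow_natCast]
    rw [show k * -(n:ℤ) = -k * n by ring]
    exact h2

private lemma swap2 (ht : ∀ g : G, Commute t g) (h : y * x * y⁻¹ = x * t ^ k)
    (a b : ℤ) : y ^ b * x ^ a = x ^ a * t ^ (k * a * b) * y ^ b := by
  have h1 : y ^ b * x ^ a * (y ^ b)⁻¹ = x ^ a * t ^ (k * a * b) := by
    have c1 : y ^ b * x ^ a * (y ^ b)⁻¹ = (y ^ b * x * (y ^ b)⁻¹) ^ a := by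
      rw [conj_zpow]
    rw [c1, ← zpow_neg, conj1 ht h b]
    have c2 : Commute x (t ^ (k * b)) := ((ht x).zpow_left (k*b)).symm
    rw [c2.mul_zpow, ← zpow_mul]
    ring_nf
  calc y ^ b * x ^ a = y ^ b * x ^ a * (y ^ b)⁻¹ * y ^ b := by group
    _ = x ^ a * t ^ (k * a * b) * y ^ b := by rw [h1]

private lemma mul_nf (ht : ∀ g : G, Commute t g) (h : y * x * y⁻¹ = x * t ^ k)
    (a b c a' b' c' : ℤ) :
    (x ^ a * y ^ b * t ^ c) * (x ^ a' * y ^ b' * t ^ c')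
      = x ^ (a + a') * y ^ (b + b') * t ^ (c + c' + k * a' * b) := by
  have hc : ∀ (e : ℤ) (g : G), t ^ e * g = g * t ^ e := fun e g => ((ht g).zpow_left e).eq
  have hm : ∀ (e : ℤ) (g w : G), t ^ e * (g * w) = g * (t ^ e * w) := by
    intro e g w; rw [← mul_assoc, hc, mul_assoc]
  have hs : ∀ w : G, y ^ b * (x ^ a' * w) = x ^ a' * (t ^ (k * a' * b) * (y ^ b * w)) := by
    intro w
    rw [← mul_assoc, swap2 ht h, mul_assoc, mul_assoc]
  simp only [mul_assoc]
  rw [hm c (x ^ a'), hm c (y ^ b'), hs, hm (k*a'*b) (y ^ b), hm (k*a'*b) (y ^ b')]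
  simp only [← zpow_add]
  rw [← mul_assoc (x ^ a) (x ^ a'), ← zpow_add, ← mul_assoc (y ^ b) (y ^ b'), ← zpow_add]
  rw [show k * a' * b + (c + c') = c + c' + k * a' * b from by ring]
  simp only [mul_assoc]

private lemma pow_nf (ht : ∀ g : G, Commute t g) (h : y * x * y⁻¹ = x * t ^ k)
    (a b c : ℤ) : ∀ n : ℕ,
    (x ^ a * y ^ b * t ^ c) ^ n
      = x ^ ((n : ℤ) * a) * y ^ ((n : ℤ) * b) * t ^ ((n : ℤ) * c + k * a * b * (n.choose 2)) := by
  intro n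
  induction n with
  | zero => simp
  | succ n ih =>
      rw [pow_succ, ih, mul_nf ht h]
      have e3 : ((n + 1).choose 2 : ℤ) = (n.choose 2 : ℤ) + n := by
        rw [Nat.choose_succ_succ, Nat.choose_one_right]; push_cast; ring
      congr 1
      · congr 1 <;> [skip; congr 1] <;> push_cast <;> ring
      · rw [e3]; push_cast; ring_nf
      
lemma normal_form (ht : ∀ g : G, Commute t g) (h : y * x * y⁻¹ = x * t ^ k)
    (hcl : Subgroup.closure {x, y, t} = ⊤) (g : G) :
    ∃ a b c : ℤ, g = x ^ a * y ^ b * t ^ c := by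
  have hS : ∀ g ∈ Subgroup.closure ({x, y, t} : Set G),
      ∃ a b c : ℤ, g = x ^ a * y ^ b * t ^ c := by
    intro g hg
    refine Subgroup.closure_induction ?_ ?_ ?_ ?_ hg
    · rintro w (rfl | rfl | rfl)
      · exact ⟨1, 0, 0, by simp⟩
      · exact ⟨0, 1, 0, by simp⟩
      · exact ⟨0, 0, 1, by simp⟩
    · exact ⟨0, 0, 0, by simp⟩
    · rintro u v - - ⟨a, b, c, rfl⟩ ⟨a', b', c', rfl⟩
      exact ⟨a + a', b + b', c + c' + k * a' * b, mul_nf ht h a b c a' b' c'⟩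
    · rintro u - ⟨a, b, c, rfl⟩
      refine ⟨-a, -b, -c + k * a * b, ?_⟩
      have h2 : (x ^ a * y ^ b * t ^ c) * (x ^ (-a) * y ^ (-b) * t ^ (-c + k * a * b)) = 1 := by
        rw [mul_nf ht h]
        rw [show a + -a = 0 by ring, show b + -b = 0 by ring,
            show c + (-c + k * a * b) + k * -a * b = 0 by ring]
        simp
      exact inv_eq_of_mul_eq_one_right h2
  exact hS g (by rw [hcl]; trivial)

end Aux

private lemma choose_dvd {p m : ℕ} (hp : p.Prime) (hm : 1 ≤ m) (h : p ≠ 2 ∨ 2 ≤ m) :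
    p ∣ (p ^ m).choose 2 := by
  set n := p ^ m with hn
  have heven : 2 ∣ n * (n - 1) := by
    rcases Nat.even_or_odd n with he | ho
    · exact Dvd.dvd.mul_right he.two_dvd _
    · have : Even (n - 1) := by
        rcases ho with ⟨r, hr⟩; exact ⟨r, by omega⟩
      exact Dvd.dvd.mul_left this.two_dvd _
  have h2C : 2 * ((p ^ m).choose 2) = n * (n - 1) := by
    rw [Nat.choose_two_right, Nat.mul_div_cancel' heven]
  rcases h with hodd | hm2
  · -- p odd
    have hpd : p ∣ n * (n - 1) := dvd_mul_of_dvd_left (dvd_pow_self p (by omega)) _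
    rw [← h2C] at hpd
    rcases (Nat.Prime.dvd_mul hp).mp hpd with h1 | h1
    · exact absurd (Nat.le_of_dvd (by norm_num) h1) (by
        have := hp.two_le
        intro hle
        interval_cases p <;> simp_all)
    · exact h1
  ·
    have hsplit : n = p * p ^ (m - 1) := by
      rw [hn, ← pow_succ']
      congr 1
      omega
    have hpd : p * p ∣ n := by
      calc p * p ∣ p * p ^ (m-1) := by
            exact Nat.mul_dvd_mul_left p (dvd_pow_self p (by omega))
        _ = n := hsplit.symm
    -- 2 * C = n * (n-1), p*p ∣ n, so p ∣ C even when p = 2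
    rcases hpd with ⟨w, hw⟩
    by_cases hp2 : p = 2
    · subst hp2
      -- C = (n/2) * (n-1) with 2*2 ∣ n
      have hC : (2 ^ m).choose 2 = (2 * w) * (n - 1) := by
        have : 2 * ((2 ^ m).choose 2) = 2 * ((2 * w) * (n - 1)) := by
          rw [h2C, hw]; ring
        omega
      rw [hC]
      exact Dvd.dvd.mul_right ⟨w, rfl⟩ _
    · -- p ≠ 2: already covered, reuse odd argument
      have hpd : p ∣ n * (n - 1) := dvd_mul_of_dvd_left (dvd_pow_self p (by omega)) _
      rw [← h2C] at hpd
      rcases (Nat.Prime.dvd_mul hp).mp hpd with h1 | h1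
      · exact absurd (Nat.le_of_dvd (by norm_num) h1) (by
          have := hp.two_le
          intro hle
          interval_cases p <;> simp_all)
      · exact h1

/-- derive `y * x * y⁻¹ = x * t ^ (-N)` from `x⁻¹ * y⁻¹ * x * y = t ^ N`. -/
private lemma rel_of_comm {G : Type*} [Group G] {x y t : G} {N : ℕ}
    (ht : ∀ g : G, Commute t g) (hcomm : x⁻¹ * y⁻¹ * x * y = t ^ N) :
    y * x * y⁻¹ = x * t ^ (-(N : ℤ)) := by
  have e : y * x * (x⁻¹ * y⁻¹ * x * y) * y⁻¹ = x := by group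
  rw [hcomm] at e
  have h1 : t ^ N * y⁻¹ = y⁻¹ * t ^ N := (ht y⁻¹).pow_left N |>.eq
  have e2 : y * x * y⁻¹ * t ^ N = x := by
    conv_rhs => rw [← e]
    rw [mul_assoc (y * x), ← h1, ← mul_assoc]
  calc y * x * y⁻¹ = y * x * y⁻¹ * t ^ N * (t ^ N)⁻¹ := by group
    _ = x * (t ^ N)⁻¹ := by rw [e2]
    _ = x * t ^ (-(N : ℤ)) := by rw [← zpow_natCast t N, ← zpow_neg]

private lemma G1_exponent {G : Type*} [Group G] {p m : ℕ} (hp : p.Prime) (hm : 1 ≤ m)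
    {x y t : G} (ht : ∀ g : G, Commute t g)
    (hcl : Subgroup.closure {x, y, t} = ⊤)
    (hordt : orderOf t = p ^ m) (hx : x ^ p = 1) (hy : y ^ p = 1)
    (hrel : y * x * y⁻¹ = x * t ^ (-((p ^ (m - 1) : ℕ) : ℤ)))
    (hdvd : p ∣ (p ^ m).choose 2) :
    ∀ g : G, g ^ (p ^ m) = 1 := by
  intro g
  obtain ⟨a, b, c, rfl⟩ := normal_form ht hrel hcl g
  rw [pow_nf ht hrel]
  have hxo : (orderOf x : ℤ) ∣ (p ^ m : ℕ) * a := by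
    have h1 : orderOf x ∣ p := orderOf_dvd_of_pow_eq_one hx
    exact Dvd.dvd.mul_right
      (Int.natCast_dvd_natCast.mpr (h1.trans (dvd_pow_self p (by omega)))) a
  have hyo : (orderOf y : ℤ) ∣ (p ^ m : ℕ) * b := by
    have h1 : orderOf y ∣ p := orderOf_dvd_of_pow_eq_one hy
    exact Dvd.dvd.mul_right
      (Int.natCast_dvd_natCast.mpr (h1.trans (dvd_pow_self p (by omega)))) b
  have hto : (orderOf t : ℤ) ∣
      ((p ^ m : ℕ) : ℤ) * c + -((p ^ (m-1) : ℕ) : ℤ) * a * b * (((p ^ m).choose 2 : ℕ) : ℤ) := by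
    rw [hordt]
    obtain ⟨d, hd⟩ := hdvd
    refine ⟨c - a * b * d, ?_⟩
    have hsplit : (p : ℤ) ^ m = (p : ℤ) ^ (m - 1) * p := by
      rw [← pow_succ]
      congr 1
      omega
    push_cast [hd]
    rw [hsplit]
    ring
  rw [orderOf_dvd_iff_zpow_eq_one.mp hxo, orderOf_dvd_iff_zpow_eq_one.mp hyo,
    orderOf_dvd_iff_zpow_eq_one.mp hto]
  simp

private lemma map_center {G H : Type*} [Group G] [Group H] (e : G ≃* H) {g : G}
    (hg : g ∈ Subgroup.center G) : e g ∈ Subgroup.center H := by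
  rw [Subgroup.mem_center_iff] at hg ⊢
  intro h
  calc h * e g = e (e.symm h * g) := by rw [map_mul, e.apply_symm_apply]
    _ = e (g * e.symm h) := by rw [hg]
    _ = e g * h := by rw [map_mul, e.apply_symm_apply]

theorem familyG1_not_iso_familyG2' (p : ℕ) (hp : p.Prime)
    (G₁ : Type*) [Group G₁] (G₂ : Type*) [Group G₂]
    (h₁ : ∃ m₁, 1 ≤ m₁ ∧ (∃ x y t₁ : G₁,
      Subgroup.closure {x, y, t₁} = ⊤ ∧
      Subgroup.center G₁ = Subgroup.zpowers t₁ ∧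
      orderOf t₁ = p ^ m₁ ∧
      x ^ p = 1 ∧ y ^ p = 1 ∧
      x⁻¹ * y⁻¹ * x * y = t₁ ^ p ^ (m₁ - 1)))
    (h₂ : ∃ m₁, 1 ≤ m₁ ∧ (∃ x y t₁ : G₂,
      Subgroup.closure {x, y, t₁} = ⊤ ∧
      Subgroup.center G₂ = Subgroup.zpowers t₁ ∧
      orderOf t₁ = p ^ m₁ ∧
      x ^ p = t₁ ∧ y ^ p = t₁ ∧
      x⁻¹ * y⁻¹ * x * y = t₁ ^ p ^ (m₁ - 1))) :
    IsEmpty (G₁ ≃* G₂) := by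
  constructor
  intro e
  obtain ⟨m₁, hm₁, x₁, y₁, t₁, hcl₁, hZ₁, hord₁, hx₁, hy₁, hc₁⟩ := h₁
  obtain ⟨m₂, hm₂, x₂, y₂, t₂, hcl₂, hZ₂, hord₂, hx₂, hy₂, hc₂⟩ := h₂
  have ht₁ : ∀ g : G₁, Commute t₁ g := by
    have hmem : t₁ ∈ Subgroup.center G₁ := by rw [hZ₁]; exact Subgroup.mem_zpowers t₁
    exact fun g => ((Subgroup.mem_center_iff.mp hmem) g).symm
  have ht₂ : ∀ g : G₂, Commute t₂ g := by
    have hmem : t₂ ∈ Subgroup.center G₂ := by rw [hZ₂]; exact Subgroup.mem_zpowers t₂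
    exact fun g => ((Subgroup.mem_center_iff.mp hmem) g).symm
  -- m₁ = m₂
  have hdvd12 : p ^ m₁ ∣ p ^ m₂ := by
    have hmem : e t₁ ∈ Subgroup.zpowers t₂ := by
      rw [← hZ₂]
      exact map_center e (by rw [hZ₁]; exact Subgroup.mem_zpowers t₁)
    obtain ⟨z, hz⟩ := Subgroup.mem_zpowers_iff.mp hmem
    have hord : orderOf (e t₁) ∣ orderOf t₂ := by
      apply orderOf_dvd_of_pow_eq_one
      rw [← hz, ← zpow_natCast, ← zpow_mul, mul_comm, zpow_mul, zpow_natCast,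
        pow_orderOf_eq_one, one_zpow]
    have hoe : orderOf (e t₁) = orderOf t₁ := orderOf_injective e.toMonoidHom e.injective t₁
    rwa [hoe, hord₁, hord₂] at hord
  have hdvd21 : p ^ m₂ ∣ p ^ m₁ := by
    have hmem : e.symm t₂ ∈ Subgroup.zpowers t₁ := by
      rw [← hZ₁]
      exact map_center e.symm (by rw [hZ₂]; exact Subgroup.mem_zpowers t₂)
    obtain ⟨z, hz⟩ := Subgroup.mem_zpowers_iff.mp hmem
    have hord : orderOf (e.symm t₂) ∣ orderOf t₁ := by
      apply orderOf_dvd_of_pow_eq_one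
      rw [← hz, ← zpow_natCast, ← zpow_mul, mul_comm, zpow_mul, zpow_natCast,
        pow_orderOf_eq_one, one_zpow]
    have hoe : orderOf (e.symm t₂) = orderOf t₂ := orderOf_injective e.symm.toMonoidHom e.symm.injective t₂
    rwa [hoe, hord₂, hord₁] at hord
  have hmeq : m₁ = m₂ := Nat.pow_right_injective hp.two_le (Nat.dvd_antisymm hdvd12 hdvd21)
  subst hmeq
  -- t₂ ^ (p ^ (m₁ - 1)) ≠ 1
  have hne : t₂ ^ (p ^ (m₁ - 1)) ≠ 1 := by
    intro hcontra
    have hd := orderOf_dvd_of_pow_eq_one hcontra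
    rw [hord₂] at hd
    have hle := (Nat.pow_dvd_pow_iff_le_right hp.one_lt).mp hd
    omega
  have hrel₁ : y₁ * x₁ * y₁⁻¹ = x₁ * t₁ ^ (-((p ^ (m₁ - 1) : ℕ) : ℤ)) := rel_of_comm ht₁ hc₁
  have hrel₂ : y₂ * x₂ * y₂⁻¹ = x₂ * t₂ ^ (-((p ^ (m₁ - 1) : ℕ) : ℤ)) := rel_of_comm ht₂ hc₂
  by_cases hcase : p = 2 ∧ m₁ = 1
  · -- D₈ vs Q₈ style case
    obtain ⟨hp2, hm1⟩ := hcase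
    subst hp2
    subst hm1
    -- x₁ is not central
    have hxnc : x₁ ∉ Subgroup.center G₁ := by
      intro hmem
      have comm := Subgroup.mem_center_iff.mp hmem y₁
      have e0 : x₁⁻¹ * y₁⁻¹ * x₁ * y₁ = 1 := by
        calc x₁⁻¹ * y₁⁻¹ * x₁ * y₁ = x₁⁻¹ * (y₁⁻¹ * (x₁ * y₁)) := by simp [mul_assoc]
          _ = x₁⁻¹ * (y₁⁻¹ * (y₁ * x₁)) := by rw [← comm]
          _ = 1 := by group
      rw [hc₁] at e0
      have hd := orderOf_dvd_of_pow_eq_one e0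
      rw [hord₁] at hd
      have hle := (Nat.pow_dvd_pow_iff_le_right (by norm_num : (1:ℕ) < 2)).mp hd
      omega
    -- in G₂ every element of order dividing 2 is central
    have hG2 : ∀ g : G₂, g ^ 2 = 1 → g ∈ Subgroup.center G₂ := by
      intro g hg
      obtain ⟨a, b, c, rfl⟩ := normal_form ht₂ hrel₂ hcl₂ g
      rw [pow_nf ht₂ hrel₂ a b c 2] at hg
      rw [show Nat.choose 2 2 = 1 from rfl] at hg
      have hxa : x₂ ^ (((2:ℕ):ℤ) * a) = t₂ ^ a := by
        rw [zpow_mul, zpow_natCast, hx₂]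
      have hyb : y₂ ^ (((2:ℕ):ℤ) * b) = t₂ ^ b := by
        rw [zpow_mul, zpow_natCast, hy₂]
      rw [hxa, hyb, ← zpow_add, ← zpow_add] at hg
      have hdvd2 := orderOf_dvd_iff_zpow_eq_one.mpr hg
      rw [hord₂] at hdvd2
      -- deduce 2 ∣ a and 2 ∣ b
      have hE : (2:ℤ) ∣ a + b - a * b + 2 * c := by
        push_cast at hdvd2
        obtain ⟨w, hw⟩ := hdvd2
        exact ⟨w, by linarith⟩
      have hzm : ((a : ZMod 2) = 0 ∧ (b : ZMod 2) = 0) := by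
        have hcast : ((a + b - a * b + 2 * c : ℤ) : ZMod 2) = 0 :=
          (ZMod.intCast_zmod_eq_zero_iff_dvd _ 2).mpr (by exact_mod_cast hE)
        push_cast at hcast
        have htwo : (2 : ZMod 2) = 0 := by decide
        rw [htwo, zero_mul, add_zero] at hcast
        revert hcast
        generalize (a : ZMod 2) = u
        generalize (b : ZMod 2) = v
        revert u v
        decide
      obtain ⟨a', ha'⟩ := (ZMod.intCast_zmod_eq_zero_iff_dvd a 2).mp hzm.1
      obtain ⟨b', hb'⟩ := (ZMod.intCast_zmod_eq_zero_iff_dvd b 2).mp hzm.2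
      rw [hZ₂]
      apply Subgroup.mem_zpowers_iff.mpr
      refine ⟨a' + b' + c, ?_⟩
      have hxa' : x₂ ^ a = t₂ ^ a' := by
        rw [ha', zpow_mul, zpow_natCast, hx₂]
      have hyb' : y₂ ^ b = t₂ ^ b' := by
        rw [hb', zpow_mul, zpow_natCast, hy₂]
      rw [hxa', hyb', ← zpow_add, ← zpow_add]
    -- contradiction
    have hsq : (e x₁) ^ 2 = 1 := by rw [← map_pow, hx₁, map_one]
    have hcent := hG2 (e x₁) hsq
    apply hxnc
    have := map_center e.symm hcent
    rwa [e.symm_apply_apply] at this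
  · -- main case: exponent argument
    have hcond : p ≠ 2 ∨ 2 ≤ m₁ := by
      by_cases hp2 : p = 2
      · right; rcases Nat.lt_or_ge m₁ 2 with h | h
        · exfalso; exact hcase ⟨hp2, by omega⟩
        · exact h
      · exact Or.inl hp2
    have hdvdC := choose_dvd hp hm₁ hcond
    have hexp := G1_exponent hp hm₁ ht₁ hcl₁ hord₁ hx₁ hy₁ hrel₁ hdvdC
    have h1 : x₂ ^ (p ^ m₁) = 1 := by
      have h0 := hexp (e.symm x₂)
      have h2 : e.symm (x₂ ^ (p ^ m₁)) = e.symm 1 := by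
        rw [map_pow, map_one]; exact h0
      exact e.symm.injective h2
    have h3 : x₂ ^ (p ^ m₁) = t₂ ^ (p ^ (m₁ - 1)) := by
      rw [show p ^ m₁ = p * p ^ (m₁ - 1) from by rw [← pow_succ']; congr 1; omega,
        pow_mul, hx₂]
    exact hne (h3 ▸ h1)

theorem familyG1_not_iso_familyG2 (p : ℕ) (hp : p.Prime)
    (G₁ : Type*) [Group G₁] (G₂ : Type*) [Group G₂]
    (h₁ : ∃ m₁, 1 ≤ m₁ ∧ InFamilyG1 p m₁ G₁)
    (h₂ : ∃ m₁, 1 ≤ m₁ ∧ InFamilyG2 p m₁ G₂) :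
    IsEmpty (G₁ ≃* G₂) := by
  exact familyG1_not_iso_familyG2' p hp G₁ G₂ h₁ h₂
end

section
/- Let p be a prime and let G be a group such that G/Z(G) ≅ C_p × C_p, G is generated by {x, y} together with Z(G) where x^p, y^p ∈ Z(G), and G is the internal direct product of subgroups D and A (every element of D commutes with every element of A, D ∩ A = {1}, DA = G) with D nonabelian. Then there exist x₁, y₁ ∈ D and z, z' ∈ Z(G) such that x₁ = x·z and y₁ = y·z'. -/
/-!
If the image of `D` in `G/Z(G) ≅ C_p × C_p` were proper, it would have order at most `p`, hence be
cyclic, and `D` would be abelian (its quotient by `D ∩ Z(G) ≤ Z(D)` being cyclic). So `D Z(G) = G`,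
and `A`, which centralizes both `D` and `Z(G)`, is central. Writing `x = d a` with `d ∈ D`, `a ∈ A`
then gives `d = x a⁻¹` with `a⁻¹ ∈ Z(G)`, and likewise for `y`.
-/

open Subgroup

theorem Subgroup.isCyclic_of_ne_top_of_card_eq_prime_sq {Q : Type*} [Group Q] {p : ℕ}
    [Fact p.Prime] (hQ : Nat.card Q = p ^ 2) {H : Subgroup Q} (hH : H ≠ ⊤) : IsCyclic H := by
  have : Finite Q := Nat.finite_of_card_ne_zero (by simp [hQ, (Fact.out : p.Prime).ne_zero])
  apply isCyclic_of_card_dvd_prime (p := p)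
  have hdvd : Nat.card H ∣ p ^ 2 := hQ ▸ H.card_subgroup_dvd_card
  obtain ⟨m, hm, hcard⟩ := (Nat.dvd_prime_pow Fact.out).mp hdvd
  interval_cases m
  · simp [hcard]
  · simp [hcard]
  · exact absurd (H.eq_top_of_card_eq (hcard.trans hQ.symm)) hH

theorem Subgroup.isMulCommutative_of_isCyclic_map_mk'_center {G : Type*} [Group G]
    (H : Subgroup G) [IsCyclic (H.map (QuotientGroup.mk' (center G)))] : IsMulCommutative H := by
  let f := ((QuotientGroup.mk' (center G)).comp H.subtype).rangeRestrict
  have : IsCyclic ((QuotientGroup.mk' (center G)).comp H.subtype).range := by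
    rwa [MonoidHom.range_comp, range_subtype]
  refine f.isMulCommutative_of_isCyclic_of_ker_le_center fun h hh => ?_
  rw [MonoidHom.ker_rangeRestrict, MonoidHom.mem_ker, MonoidHom.comp_apply, subtype_apply,
    QuotientGroup.mk'_apply, QuotientGroup.eq_one_iff] at hh
  exact mem_center_iff.mpr fun g => Subtype.ext (mem_center_iff.mp hh g)

theorem Subgroup.map_mk'_center_eq_top_of_card_eq_prime_sq {G : Type*} [Group G] {p : ℕ}
    [Fact p.Prime] (hG : Nat.card (G ⧸ center G) = p ^ 2) (H : Subgroup G)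
    (hH : ¬ IsMulCommutative H) : H.map (QuotientGroup.mk' (center G)) = ⊤ := by
  by_contra hne
  have := isCyclic_of_ne_top_of_card_eq_prime_sq hG hne
  exact hH H.isMulCommutative_of_isCyclic_map_mk'_center

theorem Subgroup.mem_center_of_map_mk'_center_eq_top {G : Type*} [Group G] {H : Subgroup G}
    (hH : H.map (QuotientGroup.mk' (center G)) = ⊤) {a : G} (ha : ∀ h ∈ H, Commute h a) :
    a ∈ center G := by
  refine mem_center_iff.mpr fun g => ?_
  obtain ⟨h, hh, hhg⟩ := hH ▸ mem_top (QuotientGroup.mk' (center G) g)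
  have hz : h⁻¹ * g ∈ center G := by
    rwa [QuotientGroup.mk'_apply, QuotientGroup.mk'_apply, QuotientGroup.eq] at hhg
  have : g = h * (h⁻¹ * g) := by group
  rw [this]
  exact ((ha h hh).mul_left (mem_center_iff.mp hz a).symm).eq

theorem exists_representatives_in_factor_general (p : ℕ) (hp : p.Prime) (G : Type*) [Group G]
    (hq : Nonempty ((G ⧸ Subgroup.center G) ≃*
      Multiplicative (ZMod p) × Multiplicative (ZMod p)))
    (x y : G)
    (D A : Subgroup G)
    (hcomm : ∀ d ∈ D, ∀ a ∈ A, Commute d a)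
    (hprod : ∀ g : G, ∃ d ∈ D, ∃ a ∈ A, g = d * a)
    (hDnonab : ∃ d ∈ D, ∃ d' ∈ D, ¬ Commute d d') :
    ∃ x₁ ∈ D, ∃ y₁ ∈ D, ∃ z ∈ Subgroup.center G, ∃ z' ∈ Subgroup.center G,
      x₁ = x * z ∧ y₁ = y * z' := by
  have := Fact.mk hp
  obtain ⟨e⟩ := hq
  have hcard : Nat.card (G ⧸ center G) = p ^ 2 := by
    rw [Nat.card_congr e.toEquiv, Nat.card_prod, ← sq]
    exact congrArg (· ^ 2) (Nat.card_zmod p)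
  have hD : D.map (QuotientGroup.mk' (center G)) = ⊤ := by
    refine D.map_mk'_center_eq_top_of_card_eq_prime_sq hcard fun _ => ?_
    obtain ⟨d, hd, d', hd', hnc⟩ := hDnonab
    exact hnc (setLike_mul_comm hd hd')
  have hA : ∀ a ∈ A, a ∈ center G := fun a ha =>
    mem_center_of_map_mk'_center_eq_top hD fun d hd => hcomm d hd a ha
  obtain ⟨dx, hdx, ax, hax, rfl⟩ := hprod x
  obtain ⟨dy, hdy, ay, hay, rfl⟩ := hprod y
  exact ⟨dx, hdx, dy, hdy, ax⁻¹, inv_mem (hA ax hax), ay⁻¹, inv_mem (hA ay hay),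
    (mul_inv_cancel_right dx ax).symm, (mul_inv_cancel_right dy ay).symm⟩

theorem exists_representatives_in_factor (p : ℕ) (hp : p.Prime) (G : Type*) [Group G]
    (hq : Nonempty ((G ⧸ Subgroup.center G) ≃*
      Multiplicative (ZMod p) × Multiplicative (ZMod p)))
    (x y : G)
    (hxp : x ^ p ∈ Subgroup.center G)
    (hyp : y ^ p ∈ Subgroup.center G)
    (hgen : Subgroup.closure (({x, y} : Set G) ∪ (Subgroup.center G : Set G)) = ⊤)
    (D A : Subgroup G)
    (hcomm : ∀ d ∈ D, ∀ a ∈ A, Commute d a)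
    (hint : D ⊓ A = ⊥)
    (hprod : ∀ g : G, ∃ d ∈ D, ∃ a ∈ A, g = d * a)
    (hDnonab : ∃ d ∈ D, ∃ d' ∈ D, ¬ Commute d d') :
    ∃ x₁ ∈ D, ∃ y₁ ∈ D, ∃ z ∈ Subgroup.center G, ∃ z' ∈ Subgroup.center G,
      x₁ = x * z ∧ y₁ = y * z' :=
  exists_representatives_in_factor_general p hp G hq x y D A hcomm hprod hDnonab
end

section
/- Let p be a prime. Every group belonging to one of the families 𝒢₃, 𝒢₄, 𝒢₅, 𝒢₆ is indecomposable. -/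
/-- Membership in family 𝒢₃: `G = ⟨x, y, t₁, t₂⟩`, `Z(G) = ⟨t₁⟩ × ⟨t₂⟩`,
`o(t₁) = p^{m₁}`, `o(t₂) = p^{m₂}`, `x^p = 1`, `y^p = t₂`, `[x,y] = t₁^{p^{m₁-1}}`. -/
def InFamilyG3 (p m₁ m₂ : ℕ) (G : Type*) [Group G] : Prop :=
  ∃ x y t₁ t₂ : G,
    Subgroup.closure {x, y, t₁, t₂} = ⊤ ∧
    Subgroup.center G = Subgroup.closure {t₁, t₂} ∧
    Subgroup.zpowers t₁ ⊓ Subgroup.zpowers t₂ = ⊥ ∧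
    orderOf t₁ = p ^ m₁ ∧ orderOf t₂ = p ^ m₂ ∧
    x ^ p = 1 ∧ y ^ p = t₂ ∧
    x⁻¹ * y⁻¹ * x * y = t₁ ^ p ^ (m₁ - 1)

/-- Membership in family 𝒢₄: as 𝒢₃ but with `x^p = t₁`, `y^p = t₂`. -/
def InFamilyG4 (p m₁ m₂ : ℕ) (G : Type*) [Group G] : Prop :=
  ∃ x y t₁ t₂ : G,
    Subgroup.closure {x, y, t₁, t₂} = ⊤ ∧
    Subgroup.center G = Subgroup.closure {t₁, t₂} ∧
    Subgroup.zpowers t₁ ⊓ Subgroup.zpowers t₂ = ⊥ ∧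
    orderOf t₁ = p ^ m₁ ∧ orderOf t₂ = p ^ m₂ ∧
    x ^ p = t₁ ∧ y ^ p = t₂ ∧
    x⁻¹ * y⁻¹ * x * y = t₁ ^ p ^ (m₁ - 1)

/-- Membership in family 𝒢₅: `G = ⟨x, y, t₁, u₁⟩`, `Z(G) = ⟨t₁⟩ × ⟨u₁⟩`,
`o(t₁) = p^{m₁}`, `o(u₁) = ∞`, `x^p = 1`, `y^p = u₁`, `[x,y] = t₁^{p^{m₁-1}}`. -/
def InFamilyG5 (p m₁ : ℕ) (G : Type*) [Group G] : Prop :=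
  ∃ x y t₁ u₁ : G,
    Subgroup.closure {x, y, t₁, u₁} = ⊤ ∧
    Subgroup.center G = Subgroup.closure {t₁, u₁} ∧
    Subgroup.zpowers t₁ ⊓ Subgroup.zpowers u₁ = ⊥ ∧
    orderOf t₁ = p ^ m₁ ∧ ¬ IsOfFinOrder u₁ ∧
    x ^ p = 1 ∧ y ^ p = u₁ ∧
    x⁻¹ * y⁻¹ * x * y = t₁ ^ p ^ (m₁ - 1)

/-- Membership in family 𝒢₆: as 𝒢₅ but with `x^p = t₁`, `y^p = u₁`. -/
def InFamilyG6 (p m₁ : ℕ) (G : Type*) [Group G] : Prop :=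
  ∃ x y t₁ u₁ : G,
    Subgroup.closure {x, y, t₁, u₁} = ⊤ ∧
    Subgroup.center G = Subgroup.closure {t₁, u₁} ∧
    Subgroup.zpowers t₁ ⊓ Subgroup.zpowers u₁ = ⊥ ∧
    orderOf t₁ = p ^ m₁ ∧ ¬ IsOfFinOrder u₁ ∧
    x ^ p = t₁ ∧ y ^ p = u₁ ∧
    x⁻¹ * y⁻¹ * x * y = t₁ ^ p ^ (m₁ - 1)

open Subgroup


open Subgroup

private lemma comm_of_closure {G : Type*} [Group G] {S : Set G} (hS : closure S = ⊤)
    (h : ∀ a ∈ S, ∀ b ∈ S, Commute a b) (a b : G) : Commute a b := by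
  have h1 : ∀ a ∈ S, ∀ b : G, Commute a b := by
    intro a ha b
    have hb : b ∈ closure S := hS ▸ mem_top b
    induction hb using closure_induction with
    | mem c hc => exact h a ha c hc
    | one => exact Commute.one_right a
    | mul c d _ _ hc hd => exact hc.mul_right hd
    | inv c _ hc => exact hc.inv_right
  have ha : a ∈ closure S := hS ▸ mem_top a
  induction ha using closure_induction with
  | mem c hc => exact h1 c hc b
  | one => exact Commute.one_left b
  | mul c d _ _ hc hd => exact hc.mul_left hd
  | inv c _ hc => exact hc.inv_left

private lemma comm_of_comm_eq_one {G : Type*} [Group G] {a b : G}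
    (h : a⁻¹ * b⁻¹ * (a * b) = 1) : Commute a b := by
  have h2 : b * a * (a⁻¹ * b⁻¹ * (a * b)) = b * a * 1 := by rw [h]
  have h3 : b * a * (a⁻¹ * b⁻¹ * (a * b)) = a * b := by group
  have : a * b = b * a := by rw [← h3, h2, mul_one]
  exact this

private lemma comm_eq_one_of_comm {G : Type*} [Group G] {a b : G}
    (h : Commute a b) : a⁻¹ * b⁻¹ * (a * b) = 1 := by
  rw [h.eq]; group

private lemma coprime_int_of_not_dvd {p : ℕ} (hp : p.Prime) {u : ℤ} (hu : ¬ (p:ℤ) ∣ u) :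
    IsCoprime ((p:ℤ)) u :=
  ((Nat.prime_iff_prime_int.mp hp).coprime_iff_not_dvd).mpr hu

private lemma mem_closure_pair {G : Type*} [Group G] {t s g : G} (hts : Commute t s)
    (hg : g ∈ closure ({t, s} : Set G)) : ∃ a b : ℤ, g = t ^ a * s ^ b := by
  induction hg using closure_induction with
  | mem c hc =>
    rcases hc with rfl | hc
    · exact ⟨1, 0, by simp⟩
    · rcases hc with rfl
      exact ⟨0, 1, by simp⟩
  | one => exact ⟨0, 0, by simp⟩
  | mul c d _ _ hc hd =>
    obtain ⟨a, b, rfl⟩ := hc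
    obtain ⟨a', b', rfl⟩ := hd
    refine ⟨a + a', b + b', ?_⟩
    have hsw : s ^ b * t ^ a' = t ^ a' * s ^ b := ((hts.zpow_zpow a' b).symm).eq
    calc t ^ a * s ^ b * (t ^ a' * s ^ b')
        = t ^ a * (s ^ b * t ^ a') * s ^ b' := by group
      _ = t ^ a * (t ^ a' * s ^ b) * s ^ b' := by rw [hsw]
      _ = (t ^ a * t ^ a') * (s ^ b * s ^ b') := by group
      _ = t ^ (a + a') * s ^ (b + b') := by rw [← zpow_add, ← zpow_add]
  | inv c _ hc =>
    obtain ⟨a, b, rfl⟩ := hc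
    refine ⟨-a, -b, ?_⟩
    have hsw : t ^ (-a) * s ^ (-b) = s ^ (-b) * t ^ (-a) := (hts.zpow_zpow (-a) (-b)).eq
    rw [mul_inv_rev, ← zpow_neg, ← zpow_neg, hsw]

private lemma main_lemma (p m : ℕ) (hp : p.Prime) (hm : 1 ≤ m) {G : Type*} [Group G]
    (y t s : G)
    (x : G)
    (hcen : Subgroup.center G = closure ({t, s} : Set G))
    (hint : zpowers t ⊓ zpowers s = ⊥)
    (hordt : orderOf t = p ^ m)
    (hords : orderOf s = 0 ∨ ∃ k, 1 ≤ k ∧ orderOf s = p ^ k)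
    (hy : y ^ p = s)
    (hxy : x⁻¹ * y⁻¹ * x * y = t ^ p ^ (m - 1))
    (H K : Subgroup G)
    (hHK : ∀ h ∈ H, ∀ k ∈ K, Commute h k)
    (hinf : H ⊓ K = ⊥)
    (hprod : ∀ g : G, ∃ h ∈ H, ∃ k ∈ K, g = h * k)
    (hKab : ∀ k ∈ K, ∀ k' ∈ K, Commute k k') : K = ⊥ := by
  have htZ : t ∈ Subgroup.center G := by
    rw [hcen]; exact subset_closure (by simp)
  have hsZ : s ∈ Subgroup.center G := by
    rw [hcen]; exact subset_closure (by simp)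
  have htc : ∀ g : G, Commute t g := fun g => (Subgroup.mem_center_iff.mp htZ g).symm
  have hsc : ∀ g : G, Commute s g := fun g => (Subgroup.mem_center_iff.mp hsZ g).symm
  have hts : Commute t s := htc s
  have KleC : ∀ k ∈ K, ∀ g : G, Commute k g := by
    intro k hk g
    obtain ⟨h, hh, k', hk', rfl⟩ := hprod g
    exact ((hHK h hh k hk).symm).mul_right (hKab k hk k' hk')
  have huniq : ∀ {h h' k k' : G}, h ∈ H → h' ∈ H → k ∈ K → k' ∈ K → h * k = h' * k' → k = k' := by
    intro h h' k k' hh hh' hk hk' he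
    have e1 : k' * k⁻¹ = h'⁻¹ * h := by
      calc k' * k⁻¹ = h'⁻¹ * (h' * k') * k⁻¹ := by group
        _ = h'⁻¹ * (h * k) * k⁻¹ := by rw [he]
        _ = h'⁻¹ * h := by group
    have hmem : k' * k⁻¹ ∈ H ⊓ K := Subgroup.mem_inf.mpr
      ⟨by rw [e1]; exact mul_mem (inv_mem hh') hh, mul_mem hk' (inv_mem hk)⟩
    rw [hinf, Subgroup.mem_bot] at hmem
    exact (mul_inv_eq_one.mp hmem).symm
  have split : ∀ a b : ℤ, t ^ a * s ^ b = 1 → t ^ a = 1 ∧ s ^ b = 1 := by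
    intro a b hab
    have h1 : t ^ a ∈ zpowers t ⊓ zpowers s := by
      refine Subgroup.mem_inf.mpr ⟨?_, ?_⟩
      · exact mem_zpowers_iff.mpr ⟨a, rfl⟩
      · have : t ^ a = (s ^ b)⁻¹ := eq_inv_of_mul_eq_one_left hab
        rw [this, ← zpow_neg]
        exact mem_zpowers_iff.mpr ⟨-b, rfl⟩
    rw [hint, Subgroup.mem_bot] at h1
    refine ⟨h1, ?_⟩
    rw [h1, one_mul] at hab; exact hab
  have split' : ∀ a b a' b' : ℤ, t ^ a * s ^ b = t ^ a' * s ^ b' →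
      t ^ (a - a') = 1 ∧ s ^ (b - b') = 1 := by
    intro a b a' b' he
    apply split
    have hsw : s ^ b * t ^ (-a') = t ^ (-a') * s ^ b := ((hts.zpow_zpow (-a') b).symm).eq
    have hsw' : s ^ b' * t ^ (-a') = t ^ (-a') * s ^ b' := ((hts.zpow_zpow (-a') b').symm).eq
    calc t ^ (a - a') * s ^ (b - b')
        = t ^ a * (t ^ (-a') * s ^ b) * s ^ (-b') := by
          rw [zpow_sub, zpow_sub, ← zpow_neg, ← zpow_neg]; group
      _ = t ^ a * (s ^ b * t ^ (-a')) * s ^ (-b') := by rw [hsw]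
      _ = (t ^ a * s ^ b) * (t ^ (-a') * s ^ (-b')) := by group
      _ = (t ^ a' * s ^ b') * (t ^ (-a') * s ^ (-b')) := by rw [he]
      _ = t ^ a' * (s ^ b' * t ^ (-a')) * s ^ (-b') := by group
      _ = t ^ a' * (t ^ (-a') * s ^ b') * s ^ (-b') := by rw [hsw']
      _ = (t ^ a' * t ^ (-a')) * (s ^ b' * s ^ (-b')) := by group
      _ = 1 := by rw [← zpow_add, ← zpow_add]; simp
  have tdvd : ∀ a : ℤ, t ^ a = 1 ↔ ((p:ℤ) ^ m ∣ a) := by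
    intro a
    rw [← orderOf_dvd_iff_zpow_eq_one, hordt]
    push_cast
    rfl
  have sdvd : ∀ b : ℤ, s ^ b = 1 ↔ ((orderOf s : ℤ) ∣ b) := fun b =>
    (orderOf_dvd_iff_zpow_eq_one).symm
  have hQp : (p:ℤ) ∣ (orderOf s : ℤ) ∨ (orderOf s : ℤ) = 0 := by
    rcases hords with h0 | ⟨k, hk1, hk⟩
    · right; rw [h0]; rfl
    · left; rw [hk]; push_cast; exact dvd_pow_self _ (by omega)
  have qdvd_of_mul : ∀ b u : ℤ, ¬ (p:ℤ) ∣ u → ((orderOf s : ℤ) ∣ b * u) →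
      (orderOf s : ℤ) ∣ b := by
    intro b u hu hbu
    rcases hords with h0 | ⟨k, hk1, hk⟩
    · rw [h0] at hbu ⊢
      push_cast at hbu ⊢
      rcases mul_eq_zero.mp (zero_dvd_iff.mp hbu) with h | h
      · rw [h]
      · exact absurd (h ▸ dvd_zero (p:ℤ)) hu
    · rw [hk] at hbu ⊢
      push_cast at hbu ⊢
      exact ((coprime_int_of_not_dvd hp hu).pow_left).dvd_of_dvd_mul_right hbu
  obtain ⟨h₁, hh₁, k₁, hk₁, hxe⟩ := hprod x
  obtain ⟨h₂, hh₂, k₂, hk₂, hye⟩ := hprod y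
  obtain ⟨ht', hht', kt, hkt, hte⟩ := hprod t
  obtain ⟨hs', hhs', ks, hks, hse⟩ := hprod s
  have cancel : ∀ k w : G, (∀ g, Commute k g) → k⁻¹ * w * k = w := by
    intro k w ck
    rw [(ck w).inv_left.eq, mul_assoc, inv_mul_cancel, mul_one]
  have zH : t ^ p ^ (m - 1) ∈ H := by
    have c₁ : ∀ g : G, Commute k₁ g := KleC k₁ hk₁
    have c₂ : ∀ g : G, Commute k₂ g := KleC k₂ hk₂
    have key : x⁻¹ * y⁻¹ * x * y = h₁⁻¹ * h₂⁻¹ * h₁ * h₂ := by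
      rw [hxe, hye]
      have e1 : (h₂ * k₂)⁻¹ * (h₁ * k₁) * (h₂ * k₂) = h₂⁻¹ * (h₁ * k₁) * h₂ := by
        have e0 : (h₂ * k₂)⁻¹ * (h₁ * k₁) * (h₂ * k₂)
            = k₂⁻¹ * (h₂⁻¹ * (h₁ * k₁) * h₂) * k₂ := by group
        rw [e0, cancel k₂ _ c₂]
      calc (h₁ * k₁)⁻¹ * (h₂ * k₂)⁻¹ * (h₁ * k₁) * (h₂ * k₂)
          = (h₁ * k₁)⁻¹ * ((h₂ * k₂)⁻¹ * (h₁ * k₁) * (h₂ * k₂)) := by group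
        _ = (h₁ * k₁)⁻¹ * (h₂⁻¹ * (h₁ * k₁) * h₂) := by rw [e1]
        _ = (k₁⁻¹ * (h₁⁻¹ * h₂⁻¹ * h₁) * k₁) * h₂ := by group
        _ = (h₁⁻¹ * h₂⁻¹ * h₁) * h₂ := by rw [cancel k₁ _ c₁]
    rw [← hxy, key]
    exact mul_mem (mul_mem (mul_mem (inv_mem hh₁) (inv_mem hh₂)) hh₁) hh₂
  have kform : ∀ k ∈ K, ∃ a b : ℤ, k = t ^ a * s ^ b := by
    intro k hk
    have hc : k ∈ Subgroup.center G :=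
      Subgroup.mem_center_iff.mpr (fun g => ((KleC k hk g).eq).symm)
    rw [hcen] at hc
    exact mem_closure_pair hts hc
  obtain ⟨a₁, b₁, hkt_eq⟩ := kform kt hkt
  obtain ⟨a₂, b₂, hks_eq⟩ := kform ks hks
  obtain ⟨a₄, b₄, hk₂_eq⟩ := kform k₂ hk₂
  have tspow : ∀ (a b c : ℤ), (t ^ a * s ^ b) ^ c = t ^ (a * c) * s ^ (b * c) := by
    intro a b c
    rw [(hts.zpow_zpow a b).mul_zpow, ← zpow_mul, ← zpow_mul]
  have commht : Commute ht' kt := ((KleC kt hkt) ht').symm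
  have commhs : Commute hs' ks := ((KleC ks hks) hs').symm
  -- E1 : kt ^ (p^(m-1)) = 1, hence p ∣ a₁
  have hN : t ^ p ^ (m-1) = ht' ^ p ^ (m-1) * kt ^ p ^ (m-1) := by
    rw [hte, commht.mul_pow]
  have ktN : kt ^ p ^ (m-1) = 1 := by
    have hmem : kt ^ p ^ (m-1) ∈ H ⊓ K := by
      refine Subgroup.mem_inf.mpr ⟨?_, ?_⟩
      · have e : kt ^ p ^ (m-1) = (ht' ^ p ^ (m-1))⁻¹ * t ^ p ^ (m-1) := by
          rw [hN]; group
        rw [e]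
        exact mul_mem (inv_mem (pow_mem hht' _)) zH
      · exact pow_mem hkt _
    rw [hinf, Subgroup.mem_bot] at hmem; exact hmem
  have ktNz : t ^ (a₁ * ((p:ℤ) ^ (m-1))) * s ^ (b₁ * ((p:ℤ) ^ (m-1))) = 1 := by
    have hc : ((p:ℤ) ^ (m-1)) = ((p ^ (m-1) : ℕ) : ℤ) := by push_cast; ring
    rw [← tspow, ← hkt_eq, hc, zpow_natCast, ktN]
  have pa₁ : (p:ℤ) ∣ a₁ := by
    have h1 := (tdvd _).mp (split _ _ ktNz).1
    have hm' : (p:ℤ) ^ m = (p:ℤ) ^ (m-1) * p := by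
      rw [← pow_succ]
      congr 1
      omega
    rw [hm'] at h1
    have h2 : (p:ℤ)^(m-1) * p ∣ (p:ℤ)^(m-1) * a₁ := by
      rwa [mul_comm a₁ _] at h1
    exact (mul_dvd_mul_iff_left (pow_ne_zero (m-1) (by exact_mod_cast hp.ne_zero))).mp h2
  -- E2 : ks = k₂ ^ p, hence p ∣ b₂
  have hks_pow : ks = k₂ ^ p := by
    have commh₂ : Commute h₂ k₂ := ((KleC k₂ hk₂) h₂).symm
    have e : hs' * ks = h₂ ^ p * k₂ ^ p := by
      calc hs' * ks = s := hse.symm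
        _ = y ^ p := hy.symm
        _ = (h₂ * k₂) ^ p := by rw [hye]
        _ = h₂ ^ p * k₂ ^ p := commh₂.mul_pow p
    exact huniq hhs' (pow_mem hh₂ p) hks (pow_mem hk₂ p) e
  have pb₂ : (p:ℤ) ∣ b₂ := by
    have e0 : ks = t ^ (a₄ * (p:ℤ)) * s ^ (b₄ * (p:ℤ)) := by
      rw [hks_pow, hk₂_eq, ← zpow_natCast (t ^ a₄ * s ^ b₄) p, tspow]
    have e : t ^ a₂ * s ^ b₂ = t ^ (a₄ * (p:ℤ)) * s ^ (b₄ * (p:ℤ)) := by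
      rw [← hks_eq, e0]
    have h2 := (sdvd _).mp (split' _ _ _ _ e).2
    rcases hQp with hpq | h0
    · have hd : (p:ℤ) ∣ b₂ - b₄ * p := dvd_trans hpq h2
      have := dvd_add hd (dvd_mul_left (p:ℤ) b₄)
      simpa using this
    · rw [h0] at h2
      have hz : b₂ - b₄ * p = 0 := zero_dvd_iff.mp h2
      have : b₂ = b₄ * p := by omega
      rw [this]
      exact dvd_mul_left _ _
  -- M1 : kt = kt^a₁ * ks^b₁
  have et : t ^ a₁ = ht' ^ a₁ * kt ^ a₁ := by rw [hte, commht.mul_zpow]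
  have es : ∀ b : ℤ, s ^ b = hs' ^ b * ks ^ b := fun b => by rw [hse, commhs.mul_zpow]
  have eq1 : (ht' ^ a₁ * hs' ^ b₁) * (kt ^ a₁ * ks ^ b₁) = 1 * kt := by
    have hsw : kt ^ a₁ * hs' ^ b₁ = hs' ^ b₁ * kt ^ a₁ :=
      (((KleC kt hkt) hs').zpow_zpow a₁ b₁).eq
    rw [one_mul]
    calc (ht' ^ a₁ * hs' ^ b₁) * (kt ^ a₁ * ks ^ b₁)
        = ht' ^ a₁ * (hs' ^ b₁ * kt ^ a₁) * ks ^ b₁ := by group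
      _ = ht' ^ a₁ * (kt ^ a₁ * hs' ^ b₁) * ks ^ b₁ := by rw [hsw]
      _ = (ht' ^ a₁ * kt ^ a₁) * (hs' ^ b₁ * ks ^ b₁) := by group
      _ = t ^ a₁ * s ^ b₁ := by rw [← et, ← es]
      _ = kt := hkt_eq.symm
  have eq2 : kt = kt ^ a₁ * ks ^ b₁ :=
    (huniq (mul_mem (H.zpow_mem hht' a₁) (H.zpow_mem hhs' b₁)) (one_mem H)
      (mul_mem (K.zpow_mem hkt a₁) (K.zpow_mem hks b₁)) hkt eq1).symm
  have eq3 : t ^ a₁ * s ^ b₁ = t ^ (a₁*a₁ + a₂*b₁) * s ^ (b₁*a₁ + b₂*b₁) := by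
    have hsw : s ^ (b₁*a₁) * t ^ (a₂*b₁) = t ^ (a₂*b₁) * s ^ (b₁*a₁) :=
      ((hts.zpow_zpow (a₂*b₁) (b₁*a₁)).symm).eq
    calc t ^ a₁ * s ^ b₁ = kt := hkt_eq.symm
      _ = kt ^ a₁ * ks ^ b₁ := eq2
      _ = (t ^ (a₁*a₁) * s ^ (b₁*a₁)) * (t ^ (a₂*b₁) * s ^ (b₂*b₁)) := by
          rw [hkt_eq, hks_eq, tspow, tspow]
      _ = t ^ (a₁*a₁) * (s ^ (b₁*a₁) * t ^ (a₂*b₁)) * s ^ (b₂*b₁) := by group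
      _ = t ^ (a₁*a₁) * (t ^ (a₂*b₁) * s ^ (b₁*a₁)) * s ^ (b₂*b₁) := by rw [hsw]
      _ = (t ^ (a₁*a₁) * t ^ (a₂*b₁)) * (s ^ (b₁*a₁) * s ^ (b₂*b₁)) := by group
      _ = t ^ (a₁*a₁ + a₂*b₁) * s ^ (b₁*a₁ + b₂*b₁) := by rw [← zpow_add, ← zpow_add]
  have hb₁ : s ^ b₁ = 1 := by
    have h2 := (sdvd _).mp (split' _ _ _ _ eq3).2
    have hre : b₁ - (b₁*a₁ + b₂*b₁) = b₁ * (1 - a₁ - b₂) := by ring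
    rw [hre] at h2
    have hu : ¬ (p:ℤ) ∣ (1 - a₁ - b₂) := by
      intro hd
      have hd1 : (p:ℤ) ∣ 1 := by
        have h5 := dvd_add (dvd_add hd pa₁) pb₂
        have h6 : (1 - a₁ - b₂) + a₁ + b₂ = 1 := by ring
        rwa [h6] at h5
      have h3 : (p:ℤ) ≤ 1 := Int.le_of_dvd one_pos hd1
      have h4 : 2 ≤ p := hp.two_le
      omega
    exact (sdvd b₁).mpr (qdvd_of_mul b₁ _ hu h2)
  have ksb₁ : ks ^ b₁ = 1 := by
    have h1 : hs' ^ b₁ * ks ^ b₁ = 1 := by rw [← es, hb₁]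
    have hmem : ks ^ b₁ ∈ H ⊓ K := by
      refine Subgroup.mem_inf.mpr ⟨?_, ?_⟩
      · have e : ks ^ b₁ = (hs' ^ b₁)⁻¹ := eq_inv_of_mul_eq_one_right h1
        rw [e]
        exact inv_mem (H.zpow_mem hhs' b₁)
      · exact K.zpow_mem hks b₁
    rw [hinf, Subgroup.mem_bot] at hmem; exact hmem
  have kt_t : kt = t ^ a₁ := by rw [hkt_eq, hb₁, mul_one]
  have eq4 : kt = kt ^ a₁ := by
    conv_lhs => rw [eq2]
    rw [ksb₁, mul_one]
  have ta₁ : t ^ (a₁ - a₁ * a₁) = 1 := by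
    have e5 : t ^ (a₁ * a₁) = t ^ a₁ := by
      calc t ^ (a₁ * a₁) = (t ^ a₁) ^ a₁ := zpow_mul t a₁ a₁
        _ = kt ^ a₁ := by rw [← kt_t]
        _ = kt := eq4.symm
        _ = t ^ a₁ := kt_t
    rw [zpow_sub, e5]
    simp
  have pma₁ : (p:ℤ)^m ∣ a₁ := by
    have h1 := (tdvd _).mp ta₁
    have hre : a₁ - a₁ * a₁ = a₁ * (1 - a₁) := by ring
    rw [hre] at h1
    have hu : ¬ (p:ℤ) ∣ (1 - a₁) := by
      intro hd
      have hd1 : (p:ℤ) ∣ 1 := by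
        have h5 := dvd_add hd pa₁
        have h6 : (1 - a₁) + a₁ = 1 := by ring
        rwa [h6] at h5
      have h3 : (p:ℤ) ≤ 1 := Int.le_of_dvd one_pos hd1
      have h4 : 2 ≤ p := hp.two_le
      omega
    exact ((coprime_int_of_not_dvd hp hu).pow_left).dvd_of_dvd_mul_right h1
  have ktone : kt = 1 := by rw [kt_t, (tdvd a₁).mpr pma₁]
  have tH : t ∈ H := by rw [hte, ktone, mul_one]; exact hht'
  -- M2 : ks
  have eq6 : ks = ks ^ b₂ := by
    have e7 : (t ^ a₂ * hs' ^ b₂) * ks ^ b₂ = 1 * ks := by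
      rw [one_mul]
      calc (t ^ a₂ * hs' ^ b₂) * ks ^ b₂ = t ^ a₂ * (hs' ^ b₂ * ks ^ b₂) := by group
        _ = t ^ a₂ * s ^ b₂ := by rw [← es]
        _ = ks := hks_eq.symm
    exact (huniq (mul_mem (H.zpow_mem tH a₂) (H.zpow_mem hhs' b₂)) (one_mem H)
      (K.zpow_mem hks b₂) hks e7).symm
  have eq7 : t ^ a₂ * s ^ b₂ = t ^ (a₂*b₂) * s ^ (b₂*b₂) := by
    calc t ^ a₂ * s ^ b₂ = ks := hks_eq.symm
      _ = ks ^ b₂ := eq6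
      _ = t ^ (a₂*b₂) * s ^ (b₂*b₂) := by rw [hks_eq, tspow]
  have hb₂ : s ^ b₂ = 1 := by
    have h2 := (sdvd _).mp (split' _ _ _ _ eq7).2
    have hre : b₂ - b₂*b₂ = b₂ * (1 - b₂) := by ring
    rw [hre] at h2
    have hu : ¬ (p:ℤ) ∣ (1 - b₂) := by
      intro hd
      have hd1 : (p:ℤ) ∣ 1 := by
        have h5 := dvd_add hd pb₂
        have h6 : (1 - b₂) + b₂ = 1 := by ring
        rwa [h6] at h5
      have h3 : (p:ℤ) ≤ 1 := Int.le_of_dvd one_pos hd1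
      have h4 : 2 ≤ p := hp.two_le
      omega
    exact (sdvd b₂).mpr (qdvd_of_mul b₂ _ hu h2)
  have ksone : ks = 1 := by
    have hmem : ks ∈ H ⊓ K := Subgroup.mem_inf.mpr
      ⟨by rw [hks_eq, hb₂, mul_one]; exact H.zpow_mem tH a₂, hks⟩
    rw [hinf, Subgroup.mem_bot] at hmem; exact hmem
  have sH : s ∈ H := by rw [hse, ksone, mul_one]; exact hhs'
  rw [eq_bot_iff]
  intro k hk
  have hkc : k ∈ Subgroup.center G :=
    Subgroup.mem_center_iff.mpr (fun g => ((KleC k hk g).eq).symm)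
  rw [hcen] at hkc
  have hkH : k ∈ H := by
    have hle : closure ({t, s} : Set G) ≤ H := (closure_le H).mpr (by
      rintro g (rfl | rfl)
      · exact tH
      · exact sH)
    exact hle hkc
  have hfin : k ∈ H ⊓ K := Subgroup.mem_inf.mpr ⟨hkH, hk⟩
  rw [hinf] at hfin
  exact hfin

private lemma key_lemma (p m : ℕ) (hp : p.Prime) (hm : 1 ≤ m) {G : Type*} [Group G]
    (x y t s : G)
    (hgen : closure ({x, y, t, s} : Set G) = ⊤)
    (hcen : Subgroup.center G = closure ({t, s} : Set G))
    (hint : zpowers t ⊓ zpowers s = ⊥)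
    (hordt : orderOf t = p ^ m)
    (hords : orderOf s = 0 ∨ ∃ k, 1 ≤ k ∧ orderOf s = p ^ k)
    (hy : y ^ p = s)
    (hxy : x⁻¹ * y⁻¹ * x * y = t ^ p ^ (m - 1)) :
    IsIndecomposable G := by
  intro H K hc hi hpr
  set z := t ^ p ^ (m - 1) with hz
  have htZ : t ∈ Subgroup.center G := by rw [hcen]; exact subset_closure (by simp)
  have hsZ : s ∈ Subgroup.center G := by rw [hcen]; exact subset_closure (by simp)
  have hzZ : z ∈ Subgroup.center G := pow_mem htZ _
  haveI : Fact p.Prime := ⟨hp⟩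
  have hzp : z ^ p = 1 := by
    rw [hz, ← pow_mul, ← pow_succ]
    have he : m - 1 + 1 = m := by omega
    rw [he, ← hordt, pow_orderOf_eq_one]
  have hzne : z ≠ 1 := by
    intro h0
    have hd := orderOf_dvd_of_pow_eq_one h0
    rw [hordt] at hd
    have := (Nat.pow_dvd_pow_iff_le_right hp.one_lt).mp hd
    omega
  have hNle : zpowers z ≤ Subgroup.center G := zpowers_le.mpr hzZ
  haveI hN : (zpowers z).Normal := by
    constructor
    intro n hn g
    have he : g * n * g⁻¹ = n := by
      rw [Subgroup.mem_center_iff.mp (hNle hn) g]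
      group
    rw [he]
    exact hn
  have commN : ∀ g g' : G, g⁻¹ * g'⁻¹ * (g * g') ∈ zpowers z := by
    intro g g'
    set φ := QuotientGroup.mk' (zpowers z) with hφ
    have hsurj : Function.Surjective φ := QuotientGroup.mk'_surjective _
    have hgenQ : closure (φ '' ({x, y, t, s} : Set G)) = ⊤ := by
      rw [← MonoidHom.map_closure, hgen]
      exact Subgroup.map_top_of_surjective φ hsurj
    have hcent : ∀ c : G, c ∈ Subgroup.center G → ∀ c' : G, Commute (φ c) (φ c') := by
      intro c hcc c'
      exact Commute.map ((Subgroup.mem_center_iff.mp hcc c').symm) φ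
    have hxyQ : Commute (φ x) (φ y) := by
      apply comm_of_comm_eq_one
      have h1 : x⁻¹ * y⁻¹ * (x * y) ∈ zpowers z := by
        have he : x⁻¹ * y⁻¹ * (x * y) = x⁻¹ * y⁻¹ * x * y := by group
        rw [he, hxy]
        exact mem_zpowers z
      have h2 : φ (x⁻¹ * y⁻¹ * (x * y)) = 1 := (QuotientGroup.eq_one_iff _).mpr h1
      simpa [map_mul, map_inv] using h2
    have hpair : ∀ a ∈ φ '' ({x, y, t, s} : Set G), ∀ b ∈ φ '' ({x, y, t, s} : Set G),
        Commute a b := by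
      rintro a ⟨a', ha', rfl⟩ b ⟨b', hb', rfl⟩
      rcases ha' with rfl | rfl | rfl | rfl <;> rcases hb' with rfl | rfl | rfl | rfl <;>
        first
          | exact Commute.refl _
          | exact hxyQ
          | exact hxyQ.symm
          | exact hcent _ htZ _
          | exact hcent _ hsZ _
          | exact (hcent _ htZ _).symm
          | exact (hcent _ hsZ _).symm
    have commQ := comm_of_closure hgenQ hpair
    have h3 : φ (g⁻¹ * g'⁻¹ * (g * g')) = 1 := by
      have h4 := comm_eq_one_of_comm (commQ (φ g) (φ g'))
      simpa [map_mul, map_inv] using h4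
    exact (QuotientGroup.eq_one_iff _).mp h3
  have zgen : ∀ c : G, c ∈ zpowers z → c ≠ 1 → z ∈ zpowers c := by
    intro c hcmem hc1
    obtain ⟨i, hi⟩ := mem_zpowers_iff.mp hcmem
    have hpi : ¬ (p : ℤ) ∣ i := by
      rintro ⟨j, hj⟩
      apply hc1
      rw [← hi, hj, zpow_mul, zpow_natCast, hzp, one_zpow]
    obtain ⟨u, v, huv⟩ := coprime_int_of_not_dvd hp hpi
    refine mem_zpowers_iff.mpr ⟨v, ?_⟩
    have hzp' : z ^ ((p : ℕ) : ℤ) = 1 := by rw [zpow_natCast, hzp]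
    have he : i * v = 1 + ((p : ℕ) : ℤ) * (-u) := by linarith [huv]
    rw [← hi]
    calc (z ^ i) ^ v = z ^ (i * v) := (zpow_mul z i v).symm
      _ = z := by rw [he, zpow_add, zpow_one, zpow_mul, hzp', one_zpow, mul_one]
  by_cases hK : ∀ k ∈ K, ∀ k' ∈ K, Commute k k'
  · exact Or.inr (main_lemma p m hp hm y t s x hcen hint hordt hords hy hxy H K hc hi hpr hK)
  · push_neg at hK
    obtain ⟨k, hk, k', hk', hnc⟩ := hK
    have hcK : k⁻¹ * k'⁻¹ * (k * k') ∈ K :=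
      mul_mem (mul_mem (inv_mem hk) (inv_mem hk')) (mul_mem hk hk')
    have hcne : k⁻¹ * k'⁻¹ * (k * k') ≠ 1 := fun h0 => hnc (comm_of_comm_eq_one h0)
    have hzK : z ∈ K := (zpowers_le.mpr hcK) (zgen _ (commN k k') hcne)
    have hHab : ∀ h ∈ H, ∀ h' ∈ H, Commute h h' := by
      intro h hh h' hh'
      by_contra hnc'
      have hcH : h⁻¹ * h'⁻¹ * (h * h') ∈ H :=
        mul_mem (mul_mem (inv_mem hh) (inv_mem hh')) (mul_mem hh hh')
      have hcne' : h⁻¹ * h'⁻¹ * (h * h') ≠ 1 := fun h0 => hnc' (comm_of_comm_eq_one h0)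
      have hzH : z ∈ H := (zpowers_le.mpr hcH) (zgen _ (commN h h') hcne')
      have hmem : z ∈ H ⊓ K := Subgroup.mem_inf.mpr ⟨hzH, hzK⟩
      rw [hi, Subgroup.mem_bot] at hmem
      exact hzne hmem
    refine Or.inl (main_lemma p m hp hm y t s x hcen hint hordt hords hy hxy K H ?_ ?_ ?_ hHab)
    · intro k1 hk1 h1 hh1
      exact (hc h1 hh1 k1 hk1).symm
    · rw [inf_comm]; exact hi
    · intro g
      obtain ⟨h1, hh1, k1, hk1, rfl⟩ := hpr g
      exact ⟨k1, hk1, h1, hh1, (hc h1 hh1 k1 hk1).eq⟩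

theorem familyG3_to_G6_indecomposable (p : ℕ) (hp : p.Prime) (G : Type*) [Group G]
    (h : (∃ m₁ m₂, 1 ≤ m₁ ∧ 1 ≤ m₂ ∧ InFamilyG3 p m₁ m₂ G) ∨
         (∃ m₁ m₂, 1 ≤ m₁ ∧ 1 ≤ m₂ ∧ InFamilyG4 p m₁ m₂ G) ∨
         (∃ m₁, 1 ≤ m₁ ∧ InFamilyG5 p m₁ G) ∨
         (∃ m₁, 1 ≤ m₁ ∧ InFamilyG6 p m₁ G)) :
    IsIndecomposable G := by
  rcases h with ⟨m₁, m₂, hm₁, hm₂, x, y, t₁, t₂, hgen, hcen, hint, hord₁, hord₂, _, hy, hxy⟩ |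
    ⟨m₁, m₂, hm₁, hm₂, x, y, t₁, t₂, hgen, hcen, hint, hord₁, hord₂, _, hy, hxy⟩ |
    ⟨m₁, hm₁, x, y, t₁, u₁, hgen, hcen, hint, hord₁, hinfu, _, hy, hxy⟩ |
    ⟨m₁, hm₁, x, y, t₁, u₁, hgen, hcen, hint, hord₁, hinfu, _, hy, hxy⟩
  · exact key_lemma p m₁ hp hm₁ x y t₁ t₂ hgen hcen hint hord₁ (Or.inr ⟨m₂, hm₂, hord₂⟩) hy hxy
  · exact key_lemma p m₁ hp hm₁ x y t₁ t₂ hgen hcen hint hord₁ (Or.inr ⟨m₂, hm₂, hord₂⟩) hy hxy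
  · exact key_lemma p m₁ hp hm₁ x y t₁ u₁ hgen hcen hint hord₁ (Or.inl (orderOf_eq_zero hinfu)) hy hxy
  · exact key_lemma p m₁ hp hm₁ x y t₁ u₁ hgen hcen hint hord₁ (Or.inl (orderOf_eq_zero hinfu)) hy hxy
end

section
/- Let p be a prime. If G₃ is a group belonging to family 𝒢₃ and G₄ is a group belonging to family 𝒢₄, then G₃ and G₄ are not isomorphic. -/
/-!
In a group of family 𝒢₃ the generator `x` satisfies `x ^ p = 1` but is not central, since
`[x, y] = t₁ ^ p ^ (m₁ - 1) ≠ 1`. A group of family 𝒢₄ has no such element. It has class two,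
so every element is `x ^ a * y ^ b * t₁ ^ i * t₂ ^ j`, and its `p`-th power is
`t₁ ^ (a + i p - p ^ (m₁ - 1) a b (p choose 2)) * t₂ ^ (b + j p)`. As `⟨t₁⟩ ∩ ⟨t₂⟩ = 1` and both
orders are positive powers of `p`, this power is trivial only if `p ∣ b`, and then `p ∣ a`;
but then `x ^ a = t₁ ^ (a / p)` and `y ^ b = t₂ ^ (b / p)` are central.
-/

open Subgroup

section
variable {G : Type*} [Group G]

theorem zpow_mul_zpow_of_mul_eq_mul_mul {u v d : G} (hd : d ∈ center G)
    (h : v * u = u * v * d) (a b : ℤ) :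
    v ^ b * u ^ a = u ^ a * v ^ b * d ^ (a * b) := by
  have hcomm : ∀ g : G, Commute g d := fun g => (hd.comm g).symm
  have hv : SemiconjBy u (v * d) v := by rw [SemiconjBy, ← mul_assoc, ← h]
  have hvb : v ^ b * u = u * v ^ b * d ^ b := by
    rw [← (hv.zpow_right b).eq, (hcomm v).mul_zpow, mul_assoc]
  have hu : SemiconjBy (v ^ b) u (u * d ^ b) := by
    rw [SemiconjBy, hvb, mul_assoc, mul_assoc, ((hcomm _).zpow_right b).eq]
  rw [(hu.zpow_right a).eq, ((hcomm u).zpow_right b).mul_zpow, ← zpow_mul, mul_comm b,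
    mul_assoc, mul_assoc, ((hcomm _).zpow_right _).symm.eq]

theorem mul_pow_of_mul_eq_mul_mul {u v d : G} (hd : d ∈ center G)
    (h : v * u = u * v * d) (n : ℕ) :
    (u * v) ^ n = u ^ n * v ^ n * d ^ n.choose 2 := by
  have hcomm : ∀ g : G, Commute g d := fun g => (hd.comm g).symm
  induction n with
  | zero => simp
  | succ n ih =>
    have hvn : v ^ n * u = u * v ^ n * d ^ n := by
      simpa using zpow_mul_zpow_of_mul_eq_mul_mul hd h 1 n
    calc (u * v) ^ (n + 1) = u ^ n * (v ^ n * u) * v * d ^ n.choose 2 := by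
          rw [pow_succ, ih]
          simp only [mul_assoc, ((hcomm _).pow_right _).symm.left_comm,
            ((hcomm v).pow_right _).symm.eq]
      _ = u ^ n * u * (v ^ n * v) * (d ^ n * d ^ n.choose 2) := by
          rw [hvn]; simp only [mul_assoc, ← ((hcomm v).pow_right n).left_comm]
      _ = u ^ (n + 1) * v ^ (n + 1) * d ^ (n + 1).choose 2 := by
          rw [← pow_succ, ← pow_succ, ← pow_add, Nat.choose_succ_succ', Nat.choose_one_right]

theorem exists_eq_zpow_mul_zpow_mul_of_mem_closure {x y d : G} {Z : Subgroup G}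
    (hZ : Z ≤ center G) (hd : d ∈ Z) (h : y * x = x * y * d) {g : G}
    (hg : g ∈ closure (insert x (insert y (Z : Set G)))) :
    ∃ a b : ℤ, ∃ z ∈ Z, g = x ^ a * y ^ b * z := by
  have hcomm : ∀ {w}, w ∈ Z → ∀ g : G, Commute g w := fun hw g => ((hZ hw).comm g).symm
  induction hg using closure_induction with
  | mem g hg =>
    rcases hg with rfl | rfl | hg
    · exact ⟨1, 0, 1, Z.one_mem, by simp⟩
    · exact ⟨0, 1, 1, Z.one_mem, by simp⟩
    · exact ⟨0, 0, g, hg, by simp⟩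
  | one => exact ⟨0, 0, 1, Z.one_mem, by simp⟩
  | mul g g' _ _ ih ih' =>
    obtain ⟨a, b, z, hz, rfl⟩ := ih
    obtain ⟨a', b', z', hz', rfl⟩ := ih'
    have hd' : d ^ (a' * b) * (z * z') ∈ Z := Z.mul_mem (Z.zpow_mem hd _) (Z.mul_mem hz hz')
    refine ⟨a + a', b + b', _, hd', ?_⟩
    calc x ^ a * y ^ b * z * (x ^ a' * y ^ b' * z')
        = x ^ a * (y ^ b * x ^ a') * y ^ b' * (z * z') := by
          simp only [mul_assoc, (hcomm hz _).symm.left_comm]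
      _ = x ^ (a + a') * y ^ (b + b') * (d ^ (a' * b) * (z * z')) := by
          rw [zpow_mul_zpow_of_mul_eq_mul_mul (hZ hd) h, zpow_add, zpow_add]
          simp only [mul_assoc, (hcomm (Z.zpow_mem hd _) _).symm.left_comm]
  | inv g _ ih =>
    obtain ⟨a, b, z, hz, rfl⟩ := ih
    refine ⟨-a, -b, d ^ (a * b) * z⁻¹, Z.mul_mem (Z.zpow_mem hd _) (Z.inv_mem hz), ?_⟩
    rw [mul_inv_rev, mul_inv_rev, ← zpow_neg, ← zpow_neg, ← (hcomm (Z.inv_mem hz) _).eq,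
      zpow_mul_zpow_of_mul_eq_mul_mul (hZ hd) h, neg_mul_neg, mul_assoc]

theorem exists_zpow_mul_zpow_eq_of_mem_closure_pair {s t : G} (h : Commute s t) {g : G}
    (hg : g ∈ closure {s, t}) : ∃ i j : ℤ, s ^ i * t ^ j = g := by
  induction hg using closure_induction with
  | mem g hg =>
    rcases hg with rfl | rfl
    · exact ⟨1, 0, by simp⟩
    · exact ⟨0, 1, by simp⟩
  | one => exact ⟨0, 0, by simp⟩
  | mul _ _ _ _ ih ih' =>
    obtain ⟨i, j, rfl⟩ := ih
    obtain ⟨i', j', rfl⟩ := ih'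
    exact ⟨i + i', j + j', by
      rw [(h.zpow_zpow i' j).symm.mul_mul_mul_comm, ← zpow_add, ← zpow_add]⟩
  | inv _ _ ih =>
    obtain ⟨i, j, rfl⟩ := ih
    exact ⟨-i, -j, by rw [mul_inv_rev, zpow_neg, zpow_neg, (h.zpow_zpow i j).inv_inv.eq]⟩

theorem orderOf_dvd_of_zpow_mul_zpow_eq_one {s t : G}
    (hst : zpowers s ⊓ zpowers t = ⊥) {i j : ℤ} (h : s ^ i * t ^ j = 1) :
    (orderOf s : ℤ) ∣ i ∧ (orderOf t : ℤ) ∣ j := by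
  have hs : s ^ i = t ^ (-j) := by rw [zpow_neg, eq_inv_iff_mul_eq_one, h]
  have hsi : s ^ i = 1 := by
    rw [← mem_bot, ← hst]
    exact ⟨zpow_mem_zpowers s i, hs ▸ zpow_mem_zpowers t (-j)⟩
  rw [hsi, one_mul] at h
  exact ⟨orderOf_dvd_iff_zpow_eq_one.mpr hsi, orderOf_dvd_iff_zpow_eq_one.mpr h⟩

theorem pow_zpow_mul_zpow_mul_zpow_mul_zpow {p k : ℕ} {x y s t : G}
    (hs : s ∈ center G) (ht : t ∈ center G) (hx : x ^ p = s) (hy : y ^ p = t)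
    (hyx : y * x = x * y * (s ^ k)⁻¹) (a b i j : ℤ) :
    (x ^ a * y ^ b * (s ^ i * t ^ j)) ^ p =
      s ^ (a + i * p - k * (a * b * p.choose 2)) * t ^ (b + j * p) := by
  have hz : s ^ i * t ^ j ∈ center G := mul_mem (zpow_mem hs i) (zpow_mem ht j)
  have hd : (s ^ k)⁻¹ ^ (a * b) ∈ center G := zpow_mem (inv_mem (pow_mem hs k)) _
  have hts : ∀ m n : ℤ, Commute (t ^ m) (s ^ n) := fun m n => (ht.comm s).zpow_zpow m n
  have hvu : y ^ b * (s ^ i * t ^ j) * x ^ a =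
      x ^ a * (y ^ b * (s ^ i * t ^ j)) * (s ^ k)⁻¹ ^ (a * b) := by
    rw [mul_assoc, (hz.comm _).eq, ← mul_assoc,
      zpow_mul_zpow_of_mul_eq_mul_mul (inv_mem (pow_mem hs k)) hyx]
    simp only [mul_assoc, (hd.comm _).left_comm]
    rw [(hd.comm _).eq]
  have hpow : ∀ (g : G) (n : ℤ), (g ^ n) ^ p = g ^ (n * p) := fun g n => by
    rw [← zpow_natCast, ← zpow_mul]
  have hdp : ((s ^ k)⁻¹ ^ (a * b)) ^ p.choose 2 = s ^ (-(k * (a * b * p.choose 2))) := by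
    rw [← zpow_natCast _ (p.choose 2), ← zpow_mul, inv_zpow', ← zpow_natCast s k, ← zpow_mul]
    ring_nf
  rw [mul_assoc, mul_pow_of_mul_eq_mul_mul hd hvu, (hz.comm _).symm.mul_pow,
    (hts j i).symm.mul_pow, hpow, hpow, hpow, hpow, mul_comm a, mul_comm b, zpow_mul, zpow_mul,
    zpow_natCast, zpow_natCast, hx, hy, hdp, sub_eq_add_neg, zpow_add, zpow_add, zpow_add]
  simp only [mul_assoc, (hts _ _).left_comm, (hts _ _).eq]

theorem InFamilyG3.exists_pow_eq_one_notMem_center {p m₁ m₂ : ℕ} (hp : 1 < p) (hm₁ : 1 ≤ m₁)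
    (h : InFamilyG3 p m₁ m₂ G) : ∃ g : G, g ^ p = 1 ∧ g ∉ center G := by
  obtain ⟨x, y, t₁, -, -, -, -, ho₁, -, hx, -, hxy⟩ := h
  refine ⟨x, hx, fun hxc => ?_⟩
  have hc : t₁ ^ p ^ (m₁ - 1) = 1 := by
    rw [← hxy, mul_assoc _ x, (hxc.comm y).eq]; group
  have := orderOf_dvd_of_pow_eq_one hc
  rw [ho₁, Nat.pow_dvd_pow_iff_le_right hp] at this
  omega

theorem InFamilyG4.mem_center_of_pow_eq_one {p m₁ m₂ : ℕ} (hm₁ : 1 ≤ m₁) (hm₂ : 1 ≤ m₂)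
    (h : InFamilyG4 p m₁ m₂ G) {g : G} (hg : g ^ p = 1) : g ∈ center G := by
  obtain ⟨x, y, t₁, t₂, hgen, hZ, hinf, ho₁, ho₂, hx, hy, hxy⟩ := h
  have ht₁ : t₁ ∈ center G := hZ ▸ subset_closure (by simp)
  have ht₂ : t₂ ∈ center G := hZ ▸ subset_closure (by simp)
  have hyx : y * x = x * y * (t₁ ^ p ^ (m₁ - 1))⁻¹ := by rw [← hxy]; group
  have hg' : g ∈ closure (insert x (insert y (center G : Set G))) := by
    refine closure_mono ?_ (hgen ▸ mem_top g)
    simp [Set.insert_subset_iff, ht₁, ht₂]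
  obtain ⟨a, b, z, hz, rfl⟩ :=
    exists_eq_zpow_mul_zpow_mul_of_mem_closure le_rfl (inv_mem (pow_mem ht₁ _)) hyx hg'
  obtain ⟨i, j, rfl⟩ := exists_zpow_mul_zpow_eq_of_mem_closure_pair (ht₁.comm t₂) (hZ ▸ hz)
  rw [pow_zpow_mul_zpow_mul_zpow_mul_zpow ht₁ ht₂ hx hy hyx] at hg
  obtain ⟨hA, hB⟩ := orderOf_dvd_of_zpow_mul_zpow_eq_one hinf hg
  rw [ho₁] at hA
  rw [ho₂] at hB
  push_cast at hA hB
  have hpb : (p : ℤ) ∣ b :=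
    (dvd_add_left (dvd_mul_left _ j)).mp ((dvd_pow_self _ (by omega)).trans hB)
  have hpa : (p : ℤ) ∣ a := by
    have hE : (p : ℤ) ∣ p ^ (m₁ - 1) * (a * b * p.choose 2) :=
      ((hpb.mul_left a).mul_right _).mul_left _
    exact (dvd_add_left (dvd_mul_left _ i)).mp
      ((dvd_sub_left hE).mp ((dvd_pow_self _ (by omega)).trans hA))
  obtain ⟨a, rfl⟩ := hpa
  obtain ⟨b, rfl⟩ := hpb
  rw [zpow_mul, zpow_mul, zpow_natCast, zpow_natCast, hx, hy]
  exact mul_mem (mul_mem (zpow_mem ht₁ a) (zpow_mem ht₂ b)) hz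

end

theorem familyG3_not_iso_familyG4 (p : ℕ) (hp : p.Prime)
    (G₃ : Type*) [Group G₃] (G₄ : Type*) [Group G₄]
    (h₃ : ∃ m₁ m₂, 1 ≤ m₁ ∧ 1 ≤ m₂ ∧ InFamilyG3 p m₁ m₂ G₃)
    (h₄ : ∃ m₁ m₂, 1 ≤ m₁ ∧ 1 ≤ m₂ ∧ InFamilyG4 p m₁ m₂ G₄) :
    IsEmpty (G₃ ≃* G₄) := by
  obtain ⟨m₁, m₂, hm₁, -, h₃⟩ := h₃
  obtain ⟨n₁, n₂, hn₁, hn₂, h₄⟩ := h₄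
  obtain ⟨g, hg, hgc⟩ := h₃.exists_pow_eq_one_notMem_center hp.one_lt hm₁
  refine ⟨fun e => hgc ((MulEquivClass.apply_mem_center_iff e).mp ?_)⟩
  exact h₄.mem_center_of_pow_eq_one hn₁ hn₂ (by rw [← map_pow, hg, map_one])
end

section
/- Let p be a prime. If G₅ is a group belonging to family 𝒢₅ and G₆ is a group belonging to family 𝒢₆, then G₅ and G₆ are not isomorphic. -/
section Aux

variable {G : Type*} [Group G]

private lemma cswap {w : G} (hw : w ∈ Subgroup.center G) (g : G) : w * g = g * w :=
  (Subgroup.mem_center_iff.mp hw g).symm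

private lemma key_comm {x y z : G} (hz : z ∈ Subgroup.center G)
    (h : x * y = y * x * z) (a b : ℤ) :
    x ^ a * y ^ b = y ^ b * x ^ a * z ^ (a * b) := by
  have hxz : Commute x z := (cswap hz x).symm
  have e : y⁻¹ * x * y = x * z := by
    rw [show y⁻¹ * x * y = y⁻¹ * (x * y) from by group, h]; group
  have h1 : y⁻¹ * x ^ a * y = x ^ a * z ^ a := by
    calc y⁻¹ * x ^ a * y = (y⁻¹ * x * y⁻¹⁻¹) ^ a := by rw [conj_zpow]; group
      _ = (x * z) ^ a := by rw [inv_inv, e]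
      _ = x ^ a * z ^ a := hxz.mul_zpow a
  have hza : z ^ a ∈ Subgroup.center G := Subgroup.zpow_mem _ hz a
  have h2 : x ^ a * y * (x ^ a)⁻¹ = y * z ^ a := by
    have e2 : x ^ a * y = y * (x ^ a * z ^ a) := by rw [← h1]; group
    have e3 : z ^ a * (x ^ a)⁻¹ = (x ^ a)⁻¹ * z ^ a := cswap hza _
    calc x ^ a * y * (x ^ a)⁻¹ = y * (x ^ a * z ^ a) * (x ^ a)⁻¹ := by rw [e2]
      _ = y * x ^ a * (z ^ a * (x ^ a)⁻¹) := by group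
      _ = y * x ^ a * ((x ^ a)⁻¹ * z ^ a) := by rw [e3]
      _ = y * z ^ a := by group
  have h3 : x ^ a * y ^ b * (x ^ a)⁻¹ = y ^ b * z ^ (a * b) := by
    calc x ^ a * y ^ b * (x ^ a)⁻¹ = (x ^ a * y * (x ^ a)⁻¹) ^ b := by rw [conj_zpow]
      _ = (y * z ^ a) ^ b := by rw [h2]
      _ = y ^ b * (z ^ a) ^ b := Commute.mul_zpow ((cswap hza y).symm) b
      _ = y ^ b * z ^ (a * b) := by rw [← zpow_mul]
  have e4 : z ^ (a * b) * x ^ a = x ^ a * z ^ (a * b) :=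
    cswap (Subgroup.zpow_mem _ hz _) _
  calc x ^ a * y ^ b = (x ^ a * y ^ b * (x ^ a)⁻¹) * x ^ a := by group
    _ = y ^ b * z ^ (a * b) * x ^ a := by rw [h3]
    _ = y ^ b * (x ^ a * z ^ (a * b)) := by rw [mul_assoc, e4]
    _ = y ^ b * x ^ a * z ^ (a * b) := by rw [mul_assoc]

private lemma key_pow {u v c : G} (hc : c ∈ Subgroup.center G)
    (h : v * u = u * v * c) :
    ∀ n : ℕ, ∃ k : ℕ, (u * v) ^ n = u ^ n * v ^ n * c ^ k := by
  intro n
  induction n with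
  | zero => exact ⟨0, by simp⟩
  | succ n ih =>
    obtain ⟨k, hk⟩ := ih
    have hvu : v ^ (n : ℤ) * u ^ (1 : ℤ) = u ^ (1 : ℤ) * v ^ (n : ℤ) * c ^ ((n : ℤ) * 1) :=
      key_comm hc h (n : ℤ) 1
    have hvu' : v ^ n * u = u * v ^ n * c ^ n := by
      simpa [zpow_natCast] using hvu
    have hcm : ∀ (j : ℕ) (g : G), c ^ j * g = g * c ^ j :=
      fun j g => cswap (Subgroup.pow_mem _ hc j) g
    refine ⟨k + n, ?_⟩
    calc (u * v) ^ (n + 1) = (u * v) ^ n * (u * v) := pow_succ _ n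
      _ = u ^ n * v ^ n * c ^ k * (u * v) := by rw [hk]
      _ = u ^ n * v ^ n * ((c ^ k * u) * v) := by group
      _ = u ^ n * v ^ n * ((u * c ^ k) * v) := by rw [hcm k u]
      _ = u ^ n * ((v ^ n * u) * (c ^ k * v)) := by group
      _ = u ^ n * ((u * v ^ n * c ^ n) * (v * c ^ k)) := by rw [hvu', hcm k v]
      _ = u ^ (n + 1) * v ^ n * ((c ^ n * v) * c ^ k) := by group
      _ = u ^ (n + 1) * v ^ n * ((v * c ^ n) * c ^ k) := by rw [hcm n v]
      _ = u ^ (n + 1) * v ^ (n + 1) * c ^ (k + n) := by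
          rw [pow_add, pow_succ v n]; group

end Aux

theorem familyG5_not_iso_familyG6 (p : ℕ) (hp : p.Prime)
    (G₅ : Type*) [Group G₅] (G₆ : Type*) [Group G₆]
    (h₅ : ∃ m₁, 1 ≤ m₁ ∧ InFamilyG5 p m₁ G₅)
    (h₆ : ∃ m₁, 1 ≤ m₁ ∧ InFamilyG6 p m₁ G₆) :
    IsEmpty (G₅ ≃* G₆) := by
  constructor
  intro φ
  obtain ⟨m₅, hm₅, x₅, y₅, t₅, u₅, htop₅, hZ₅, hint₅, hord₅, hu₅, hx₅, hy₅, hcomm₅⟩ := h₅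
  obtain ⟨m, hm, x, y, t, u, htop, hZ, hint, hord, huord, hx, hy, hcomm⟩ := h₆
  -- x₅ is a non-central element of G₅ with x₅ ^ p = 1
  have hne : t₅ ^ p ^ (m₅ - 1) ≠ 1 := by
    intro hone
    have hdvd := orderOf_dvd_of_pow_eq_one hone
    rw [hord₅] at hdvd
    have h2 := Nat.le_of_dvd (pow_pos hp.pos _) hdvd
    have h3 : p ^ (m₅ - 1) < p ^ m₅ := Nat.pow_lt_pow_right hp.one_lt (by omega)
    omega
  have hxnc₅ : x₅ ∉ Subgroup.center G₅ := by
    intro hc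
    apply hne
    rw [← hcomm₅,
      show x₅⁻¹ * y₅⁻¹ * x₅ * y₅ = x₅⁻¹ * (y₅⁻¹ * x₅) * y₅ from by group,
      Subgroup.mem_center_iff.mp hc y₅⁻¹]
    group
  set g : G₆ := φ x₅ with hgdef
  have hgp : g ^ p = 1 := by
    rw [hgdef, ← map_pow, hx₅, map_one]
  have hgnc : g ∉ Subgroup.center G₆ := by
    intro hgc
    apply hxnc₅
    rw [Subgroup.mem_center_iff]
    intro g'
    apply φ.injective
    simp only [map_mul]
    exact Subgroup.mem_center_iff.mp hgc (φ g')
  -- notation in G₆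
  have htc : t ∈ Subgroup.center G₆ := by
    rw [hZ]; exact Subgroup.subset_closure (by simp)
  have huc : u ∈ Subgroup.center G₆ := by
    rw [hZ]; exact Subgroup.subset_closure (by simp)
  set z : G₆ := t ^ p ^ (m - 1) with hzdef
  have hzc : z ∈ Subgroup.center G₆ := Subgroup.pow_mem _ htc _
  have hxyz : x * y = y * x * z := by rw [← hcomm]; group
  have hco : Commute t u := cswap htc u
  -- decomposition of central elements
  have hcd : ∀ w ∈ Subgroup.center G₆, ∃ s r : ℤ, w = t ^ s * u ^ r := by
    intro w hw
    rw [hZ] at hw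
    induction hw using Subgroup.closure_induction with
    | mem v hv =>
        simp only [Set.mem_insert_iff, Set.mem_singleton_iff] at hv
        rcases hv with h | h
        · exact ⟨1, 0, by rw [h]; group⟩
        · exact ⟨0, 1, by rw [h]; group⟩
    | one => exact ⟨0, 0, by group⟩
    | mul v₁ v₂ _ _ ihg ihh =>
        obtain ⟨s, r, rfl⟩ := ihg
        obtain ⟨s', r', rfl⟩ := ihh
        refine ⟨s + s', r + r', ?_⟩
        have hsw : u ^ r * t ^ s' = t ^ s' * u ^ r := ((hco.zpow_zpow s' r).eq).symm
        calc t ^ s * u ^ r * (t ^ s' * u ^ r')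
            = t ^ s * (u ^ r * t ^ s') * u ^ r' := by group
          _ = t ^ s * (t ^ s' * u ^ r) * u ^ r' := by rw [hsw]
          _ = t ^ (s + s') * u ^ (r + r') := by group
    | inv v _ ih =>
        obtain ⟨s, r, rfl⟩ := ih
        refine ⟨-s, -r, ?_⟩
        have hsw : u ^ (-r) * t ^ (-s) = t ^ (-s) * u ^ (-r) :=
          ((hco.zpow_zpow (-s) (-r)).eq).symm
        calc (t ^ s * u ^ r)⁻¹ = u ^ (-r) * t ^ (-s) := by group
          _ = t ^ (-s) * u ^ (-r) := by rw [hsw]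
  -- decomposition of arbitrary elements
  have hgd : ∀ g : G₆, ∃ a b : ℤ, ∃ w ∈ Subgroup.center G₆, g = x ^ a * y ^ b * w := by
    intro g
    have hg : g ∈ Subgroup.closure {x, y, t, u} := by rw [htop]; trivial
    induction hg using Subgroup.closure_induction with
    | mem v hv =>
        simp only [Set.mem_insert_iff, Set.mem_singleton_iff] at hv
        rcases hv with h | h | h | h
        · subst h; exact ⟨1, 0, 1, one_mem _, by group⟩
        · subst h; exact ⟨0, 1, 1, one_mem _, by group⟩
        · exact ⟨0, 0, v, by rw [h]; exact htc, by group⟩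
        · exact ⟨0, 0, v, by rw [h]; exact huc, by group⟩
    | one => exact ⟨0, 0, 1, one_mem _, by group⟩
    | mul v₁ v₂ _ _ ihg ihh =>
        obtain ⟨a, b, w, hw, rfl⟩ := ihg
        obtain ⟨c, d, w', hw', rfl⟩ := ihh
        refine ⟨a + c, b + d, z ^ (-(c * b)) * (w * w'),
          mul_mem (Subgroup.zpow_mem _ hzc _) (mul_mem hw hw'), ?_⟩
        have hyx : y ^ b * x ^ c = x ^ c * y ^ b * z ^ (-(c * b)) := by
          rw [key_comm hzc hxyz c b]; group
        have hw1 : w * (x ^ c * y ^ d * w') = (x ^ c * y ^ d * w') * w := cswap hw _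
        have hz1 : z ^ (-(c * b)) * y ^ d = y ^ d * z ^ (-(c * b)) :=
          cswap (Subgroup.zpow_mem _ hzc _) _
        have hww : w' * w = w * w' := cswap hw' w
        calc x ^ a * y ^ b * w * (x ^ c * y ^ d * w')
            = x ^ a * y ^ b * ((x ^ c * y ^ d * w') * w) := by rw [mul_assoc, hw1]
          _ = x ^ a * ((y ^ b * x ^ c) * y ^ d) * (w' * w) := by group
          _ = x ^ a * ((x ^ c * y ^ b * z ^ (-(c * b))) * y ^ d) * (w' * w) := by rw [hyx]
          _ = x ^ a * (x ^ c * (y ^ b * (z ^ (-(c * b)) * y ^ d))) * (w' * w) := by group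
          _ = x ^ a * (x ^ c * (y ^ b * (y ^ d * z ^ (-(c * b))))) * (w * w') := by
              rw [hz1, hww]
          _ = x ^ (a + c) * y ^ (b + d) * (z ^ (-(c * b)) * (w * w')) := by group
    | inv v _ ih =>
        obtain ⟨a, b, w, hw, rfl⟩ := ih
        refine ⟨-a, -b, z ^ (-(a * b)) * w⁻¹,
          mul_mem (Subgroup.zpow_mem _ hzc _) (inv_mem hw), ?_⟩
        have hyx : y ^ (-b) * x ^ (-a) = x ^ (-a) * y ^ (-b) * z ^ (-(a * b)) := by
          rw [key_comm hzc hxyz (-a) (-b)]; group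
        have hw2 : w⁻¹ * (x ^ (-a) * y ^ (-b) * z ^ (-(a * b)))
            = (x ^ (-a) * y ^ (-b) * z ^ (-(a * b))) * w⁻¹ := cswap (inv_mem hw) _
        calc (x ^ a * y ^ b * w)⁻¹ = w⁻¹ * (y ^ (-b) * x ^ (-a)) := by group
          _ = w⁻¹ * (x ^ (-a) * y ^ (-b) * z ^ (-(a * b))) := by rw [hyx]
          _ = (x ^ (-a) * y ^ (-b) * z ^ (-(a * b))) * w⁻¹ := hw2
          _ = x ^ (-a) * y ^ (-b) * (z ^ (-(a * b)) * w⁻¹) := by group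
  obtain ⟨a, b, w, hw, hgw⟩ := hgd g
  obtain ⟨s, r, hwsr⟩ := hcd w hw
  -- not both a and b are divisible by p
  have hpab : ¬ ((p : ℤ) ∣ a ∧ (p : ℤ) ∣ b) := by
    rintro ⟨⟨a', rfl⟩, ⟨b', rfl⟩⟩
    apply hgnc
    rw [hgw]
    have hxa : x ^ ((p : ℤ) * a') ∈ Subgroup.center G₆ := by
      rw [zpow_mul, zpow_natCast, hx]
      exact Subgroup.zpow_mem _ htc _
    have hyb : y ^ ((p : ℤ) * b') ∈ Subgroup.center G₆ := by
      rw [zpow_mul, zpow_natCast, hy]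
      exact Subgroup.zpow_mem _ huc _
    exact mul_mem (mul_mem hxa hyb) hw
  -- compute g ^ p
  set cc : G₆ := z ^ (-(a * b)) with hccdef
  have hccc : cc ∈ Subgroup.center G₆ := Subgroup.zpow_mem _ hzc _
  have hvu : y ^ b * x ^ a = x ^ a * y ^ b * cc := by
    rw [hccdef, key_comm hzc hxyz a b]; group
  obtain ⟨k, hk⟩ := key_pow hccc hvu p
  set M : ℤ := ((p ^ (m - 1) : ℕ) : ℤ) * (-(a * b) * (k : ℤ)) with hMdef
  have e1 : (x ^ a) ^ p = t ^ a := by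
    rw [← zpow_natCast (x ^ a) p, ← zpow_mul, mul_comm a (p : ℤ), zpow_mul, zpow_natCast, hx]
  have e2 : (y ^ b) ^ p = u ^ b := by
    rw [← zpow_natCast (y ^ b) p, ← zpow_mul, mul_comm b (p : ℤ), zpow_mul, zpow_natCast, hy]
  have e3 : cc ^ k = t ^ M := by
    rw [hMdef, ← zpow_natCast cc k, hccdef, ← zpow_mul, hzdef,
      ← zpow_natCast t (p ^ (m - 1)), ← zpow_mul]
  have e4 : w ^ p = t ^ (s * (p : ℤ)) * u ^ (r * (p : ℤ)) := by
    rw [hwsr, (hco.zpow_zpow s r).mul_pow p,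
      ← zpow_natCast (t ^ s) p, ← zpow_mul, ← zpow_natCast (u ^ r) p, ← zpow_mul]
  have hsplit : (x ^ a * y ^ b * w) ^ p
      = t ^ (a + M + s * (p : ℤ)) * u ^ (b + r * (p : ℤ)) := by
    have hcw : Commute (x ^ a * y ^ b) w := (cswap hw _).symm
    have s1 : u ^ b * t ^ M = t ^ M * u ^ b := cswap (Subgroup.zpow_mem _ huc b) _
    have s2 : u ^ b * t ^ (s * (p : ℤ)) = t ^ (s * (p : ℤ)) * u ^ b :=
      cswap (Subgroup.zpow_mem _ huc b) _
    calc (x ^ a * y ^ b * w) ^ p = (x ^ a * y ^ b) ^ p * w ^ p := hcw.mul_pow p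
      _ = (x ^ a) ^ p * (y ^ b) ^ p * cc ^ k * w ^ p := by rw [hk]
      _ = t ^ a * u ^ b * t ^ M * (t ^ (s * (p : ℤ)) * u ^ (r * (p : ℤ))) := by
          rw [e1, e2, e3, e4]
      _ = t ^ a * ((u ^ b * t ^ M) * t ^ (s * (p : ℤ))) * u ^ (r * (p : ℤ)) := by group
      _ = t ^ a * ((t ^ M * u ^ b) * t ^ (s * (p : ℤ))) * u ^ (r * (p : ℤ)) := by rw [s1]
      _ = t ^ a * (t ^ M * (u ^ b * t ^ (s * (p : ℤ)))) * u ^ (r * (p : ℤ)) := by group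
      _ = t ^ a * (t ^ M * (t ^ (s * (p : ℤ)) * u ^ b)) * u ^ (r * (p : ℤ)) := by rw [s2]
      _ = t ^ (a + M + s * (p : ℤ)) * u ^ (b + r * (p : ℤ)) := by group
  have hABone : t ^ (a + M + s * (p : ℤ)) * u ^ (b + r * (p : ℤ)) = 1 := by
    rw [← hsplit, ← hgw]; exact hgp
  have h' : t ^ (a + M + s * (p : ℤ)) = u ^ (-(b + r * (p : ℤ))) := by
    rw [zpow_neg]
    exact eq_inv_of_mul_eq_one_left hABone
  have htA1 : t ^ (a + M + s * (p : ℤ)) = 1 := by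
    have hmem : t ^ (a + M + s * (p : ℤ)) ∈ Subgroup.zpowers t ⊓ Subgroup.zpowers u := by
      refine ⟨Subgroup.zpow_mem_zpowers t _, ?_⟩
      rw [h']
      exact Subgroup.zpow_mem_zpowers u _
    rw [hint] at hmem
    exact Subgroup.mem_bot.mp hmem
  have huB1 : u ^ (b + r * (p : ℤ)) = 1 := by
    rw [htA1, one_mul] at hABone
    exact hABone
  have hB0 : b + r * (p : ℤ) = 0 := by
    by_contra hB
    apply huord
    refine isOfFinOrder_iff_pow_eq_one.mpr ⟨(b + r * (p : ℤ)).natAbs, Int.natAbs_pos.mpr hB, ?_⟩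
    have h1 : u ^ (((b + r * (p : ℤ)).natAbs : ℤ)) = 1 := by
      rcases Int.natAbs_eq (b + r * (p : ℤ)) with hcase | hcase
      · rw [← hcase]; exact huB1
      · rw [show (((b + r * (p : ℤ)).natAbs : ℤ)) = -(b + r * (p : ℤ)) from by omega,
          zpow_neg, huB1, inv_one]
    rw [zpow_natCast] at h1
    exact h1
  have pb : (p : ℤ) ∣ b := ⟨-r, by linear_combination hB0⟩
  have pdvdA : (p : ℤ) ∣ (a + M + s * (p : ℤ)) := by
    have h1 : ((p ^ m : ℕ) : ℤ) ∣ (a + M + s * (p : ℤ)) := by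
      rw [← hord]
      exact orderOf_dvd_iff_zpow_eq_one.mpr htA1
    have h2 : (p : ℤ) ∣ ((p ^ m : ℕ) : ℤ) := by
      push_cast
      exact dvd_pow_self _ (by omega)
    exact h2.trans h1
  have pM : (p : ℤ) ∣ M := by
    obtain ⟨b', hb'⟩ := pb
    rw [hMdef, hb']
    exact ⟨((p ^ (m - 1) : ℕ) : ℤ) * (-(a * b') * (k : ℤ)), by ring⟩
  have pa : (p : ℤ) ∣ a := by
    have h3 : (p : ℤ) ∣ s * (p : ℤ) := ⟨s, by ring⟩
    have h4 := dvd_sub (dvd_sub pdvdA pM) h3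
    have e : a + M + s * (p : ℤ) - M - s * (p : ℤ) = a := by ring
    rwa [e] at h4
  exact hpab ⟨pa, pb⟩
end

section
/- Let p be an odd prime and let G be a group belonging to family 𝒢₄. Then every element w ∈ G with w^p = 1 lies in the center Z(G); equivalently, G contains no noncentral element of order p. -/
open Subgroup

section

variable {G : Type*} [Group G]

theorem Commute.mem_closure_pair {u v g : G} (huv : Commute u v) :
    g ∈ closure {u, v} ↔ ∃ m n : ℤ, u ^ m * v ^ n = g := by
  refine ⟨fun hg => ?_, ?_⟩
  · induction hg using closure_induction with
    | mem g hg =>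
      rcases hg with rfl | rfl
      · exact ⟨1, 0, by simp⟩
      · exact ⟨0, 1, by simp⟩
    | one => exact ⟨0, 0, by simp⟩
    | mul _ _ _ _ hg hh =>
      obtain ⟨m, n, rfl⟩ := hg
      obtain ⟨m', n', rfl⟩ := hh
      refine ⟨m + m', n + n', ?_⟩
      calc u ^ (m + m') * v ^ (n + n') = u ^ m * (u ^ m' * v ^ n) * v ^ n' := by group
        _ = u ^ m * v ^ n * (u ^ m' * v ^ n') := by rw [(huv.zpow_zpow m' n).eq]; group
    | inv _ _ hg =>
      obtain ⟨m, n, rfl⟩ := hg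
      refine ⟨-m, -n, ?_⟩
      rw [mul_inv_rev, zpow_neg, zpow_neg, (huv.zpow_zpow m n).inv_inv.eq]
  · rintro ⟨m, n, rfl⟩
    exact mul_mem (zpow_mem (subset_closure (by simp)) m) (zpow_mem (subset_closure (by simp)) n)

theorem pow_mul_eq_mul_pow_mul_pow {a b c : G} (hba : b * a = a * b * c) (hcb : Commute c b)
    (n : ℕ) : b ^ n * a = a * b ^ n * c ^ n := by
  induction n with
  | zero => simp
  | succ n ih =>
    calc b ^ (n + 1) * a = b * (b ^ n * a) := by rw [pow_succ', mul_assoc]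
      _ = b * a * (b ^ n * c ^ n) := by rw [ih]; group
      _ = a * b * (c * b ^ n) * c ^ n := by rw [hba]; group
      _ = a * b ^ (n + 1) * c ^ (n + 1) := by rw [(hcb.pow_right n).eq]; group

theorem mul_pow_eq_mul_pow_mul_pow_choose_two {a b c : G} (hba : b * a = a * b * c)
    (hca : Commute c a) (hcb : Commute c b) (n : ℕ) :
    (a * b) ^ n = a ^ n * b ^ n * c ^ n.choose 2 := by
  induction n with
  | zero => simp
  | succ n ih =>
    calc (a * b) ^ (n + 1) = a ^ n * b ^ n * (c ^ n.choose 2 * (a * b)) := by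
          rw [pow_succ, ih, mul_assoc]
      _ = a ^ n * (b ^ n * a) * b * c ^ n.choose 2 := by
          rw [((hca.mul_right hcb).pow_left _).eq]; group
      _ = a ^ n * a * b ^ n * (c ^ n * b) * c ^ n.choose 2 := by
          rw [pow_mul_eq_mul_pow_mul_pow hba hcb]; group
      _ = a ^ (n + 1) * b ^ (n + 1) * c ^ (n + 1).choose 2 := by
          rw [(hcb.pow_left n).eq, Nat.choose_succ_succ', Nat.choose_one_right, pow_add c]; group

theorem Odd.dvd_choose_two {n : ℕ} (hn : Odd n) : n ∣ n.choose 2 := by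
  obtain ⟨k, rfl⟩ := hn
  refine ⟨k, ?_⟩
  rw [Nat.choose_two_right, Nat.add_sub_cancel, mul_comm 2 k, ← mul_assoc,
    Nat.mul_div_cancel _ two_pos]

theorem zpow_pow_comm (a : G) (k : ℤ) (n : ℕ) : (a ^ k) ^ n = (a ^ n) ^ k := by
  rw [← zpow_natCast, zpow_comm, zpow_natCast]

theorem mul_pow_eq_mul_pow_of_odd {a b : G} {n : ℕ} (hn : Odd n)
    (hab : Commute (a : G ⧸ center G) b) (hbn : b ^ n ∈ center G) :
    (a * b) ^ n = a ^ n * b ^ n := by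
  set c := (a * b)⁻¹ * (b * a)
  have hc : c ∈ center G := QuotientGroup.eq.mp hab.eq
  have hcomm (g : G) : Commute g c := mem_center_iff.mp hc g
  have hba : b * a = a * b * c := (mul_inv_cancel_left (a * b) (b * a)).symm
  have hcn : c ^ n = 1 := by
    have := pow_mul_eq_mul_pow_mul_pow hba (hcomm b).symm n
    rwa [(mem_center_iff.mp hbn a).symm, eq_comm, mul_eq_left] at this
  obtain ⟨k, hk⟩ := hn.dvd_choose_two
  rw [mul_pow_eq_mul_pow_mul_pow_choose_two hba (hcomm a).symm (hcomm b).symm, hk, pow_mul, hcn,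
    one_pow, mul_one]

theorem exists_eq_zpow_mul_zpow_of_closure_eq_top {x y : G} {n : ℕ}
    (hgen : closure {x, y} = ⊤) (hZ : center G = closure {x ^ n, y ^ n})
    (hxy : Commute (x : G ⧸ center G) y) (w : G) : ∃ i j : ℤ, w = x ^ i * y ^ j := by
  have hw := mem_map_of_mem (QuotientGroup.mk' (center G)) (hgen ▸ mem_top w)
  rw [MonoidHom.map_closure, Set.image_pair] at hw
  obtain ⟨i, j, hij⟩ := hxy.mem_closure_pair.mp hw
  have hc : (x ^ i * y ^ j)⁻¹ * w ∈ closure {x ^ n, y ^ n} :=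
    hZ ▸ QuotientGroup.eq.mp (by simpa using hij)
  have hxn (g : G) : Commute g (x ^ n) := mem_center_iff.mp (hZ ▸ subset_closure (by simp)) g
  obtain ⟨k, l, hkl⟩ := (hxn (y ^ n)).symm.mem_closure_pair.mp hc
  refine ⟨i + n * k, j + n * l, ?_⟩
  rw [eq_mul_of_inv_mul_eq hkl.symm, zpow_add, zpow_add, zpow_mul, zpow_mul, zpow_natCast,
    zpow_natCast, ← mul_assoc, mul_assoc (x ^ i), ((hxn (y ^ j)).zpow_right k).eq]
  group

theorem dvd_of_zpow_eq_one_of_orderOf_eq_pow {t : G} {p m : ℕ} (hm : m ≠ 0)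
    (ht : orderOf t = p ^ m) {k : ℤ} (hk : t ^ k = 1) : (p : ℤ) ∣ k :=
  (Int.natCast_dvd_natCast.mpr (dvd_pow_self p hm)).trans
    (ht ▸ orderOf_dvd_iff_zpow_eq_one.mpr hk)

end

theorem familyG4_no_noncentral_order_p_general (p : ℕ) (hodd : Odd p)
    (G : Type*) [Group G]
    (h : ∃ m₁ m₂, 1 ≤ m₁ ∧ 1 ≤ m₂ ∧ InFamilyG4 p m₁ m₂ G) :
    ∀ w : G, w ^ p = 1 → w ∈ Subgroup.center G := by
  obtain ⟨m₁, m₂, hm₁, hm₂, x, y, _, _, hgen, hZ, hdisj, ho₁, ho₂, rfl, rfl, hxy⟩ := h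
  have hxp : x ^ p ∈ center G := hZ ▸ subset_closure (by simp)
  have hyp : y ^ p ∈ center G := hZ ▸ subset_closure (by simp)
  have hxy_mod : Commute (x : G ⧸ center G) y := by
    have : (y * x)⁻¹ * (x * y) ∈ center G := by
      rw [mul_inv_rev, ← mul_assoc, hxy]
      exact pow_mem hxp _
    exact (QuotientGroup.eq.mpr this).symm
  have hgen_xy : closure {x, y} = ⊤ := by
    refine eq_top_iff.mpr (hgen ▸ (closure_le _).mpr ?_)
    have hx : x ∈ closure {x, y} := subset_closure (by simp)
    have hy : y ∈ closure {x, y} := subset_closure (by simp)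
    simp [Set.insert_subset_iff, hx, hy, pow_mem]
  intro w hw
  obtain ⟨i, j, rfl⟩ := exists_eq_zpow_mul_zpow_of_closure_eq_top hgen_xy hZ hxy_mod w
  have hxy_ij : Commute ((x ^ i : G) : G ⧸ center G) (y ^ j : G) := by
    rw [QuotientGroup.mk_zpow, QuotientGroup.mk_zpow]
    exact hxy_mod.zpow_zpow i j
  rw [mul_pow_eq_mul_pow_of_odd hodd hxy_ij (zpow_pow_comm y j p ▸ zpow_mem hyp j),
    zpow_pow_comm, zpow_pow_comm] at hw
  obtain ⟨hi, hj⟩ := disjoint_iff_mul_eq_one.mp (disjoint_iff.mpr hdisj)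
    (zpow_mem_zpowers _ i) (zpow_mem_zpowers _ j) hw
  obtain ⟨i', rfl⟩ := dvd_of_zpow_eq_one_of_orderOf_eq_pow (by omega) ho₁ hi
  obtain ⟨j', rfl⟩ := dvd_of_zpow_eq_one_of_orderOf_eq_pow (by omega) ho₂ hj
  rw [zpow_mul, zpow_mul, zpow_natCast, zpow_natCast]
  exact mul_mem (zpow_mem hxp i') (zpow_mem hyp j')

theorem familyG4_no_noncentral_order_p (p : ℕ) (hp : p.Prime) (hodd : Odd p)
    (G : Type*) [Group G]
    (h : ∃ m₁ m₂, 1 ≤ m₁ ∧ 1 ≤ m₂ ∧ InFamilyG4 p m₁ m₂ G) :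
    ∀ w : G, w ^ p = 1 → w ∈ Subgroup.center G :=
  familyG4_no_noncentral_order_p_general p hodd G h
end
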